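/- arXiv:2001.06794 — 10 statements merged into one kernel-verified Lean document; each statement's English description precedes it below -/
import Mathlib

section
/- Let R be a simple ring and let P be an (R,R)-bimodule. Suppose there is an isomorphism f : R → P of left R-modules, and that the element p₀ := f(1) generates P as a right R-module (i.e., every element of P has the form p₀ · r for some r ∈ R). Then there exists a ring automorphism η of R such that p₀ · r = η(r) • p₀ for all r ∈ R; equivalently, f(x) · r = f(x · η(r)) for all x, r ∈ R, so that P is isomorphic as an (R,R)-bimodule to the bimodule R_{1,η} (R with left action given by ring multiplication and right action twisted through η). -/
/-- Paper: Lemma 7.1.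
Let `R` be a simple ring and `P` an `(R,R)`-bimodule (left `R`-module and right
`R`-module, i.e. `Rᵐᵒᵖ`-module, with commuting actions).  If `f : R ≃ₗ[R] P` is an
isomorphism of left `R`-modules and `p₀ := f 1` generates `P` as a right `R`-module,
then there is a ring automorphism `η` of `R` with `p₀ · r = η r • p₀` for all `r`;
equivalently `f x · r = f (x * η r)` for all `x r : R`, so `P ≅ R_{1,η}` as a bimodule. -/
theorem clifford_stmt0 {R P : Type*} [Ring R] [IsSimpleRing R]
    [AddCommGroup P] [Module R P] [Module Rᵐᵒᵖ P] [SMulCommClass R Rᵐᵒᵖ P]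
    (f : R ≃ₗ[R] P)
    (hgen : ∀ p : P, ∃ r : R, p = MulOpposite.op r • f 1) :
    ∃ η : R ≃+* R,
      (∀ r : R, MulOpposite.op r • f 1 = η r • f 1) ∧
      (∀ x r : R, MulOpposite.op r • f x = f (x * η r)) := by
  haveI : SMulCommClass Rᵐᵒᵖ R P := SMulCommClass.symm _ _ _
  have h1 : ∀ x : R, f x = x • f 1 := fun x => by
    rw [← map_smul, smul_eq_mul, mul_one]
  have key : ∀ r : R, MulOpposite.op r • f 1 = f (f.symm (MulOpposite.op r • f 1)) := by
    intro r; rw [f.apply_symm_apply]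
  let g : R →+* R :=
  { toFun := fun r => f.symm (MulOpposite.op r • f 1)
    map_one' := by simp
    map_zero' := by simp
    map_add' := fun r s => by
      show f.symm (MulOpposite.op (r + s) • f 1) = _
      rw [MulOpposite.op_add, add_smul, map_add]
    map_mul' := fun r s => by
      apply f.injective
      rw [f.apply_symm_apply, h1 (_ * _), mul_smul]
      have : MulOpposite.op (r * s) = MulOpposite.op s * MulOpposite.op r := rfl
      rw [this, mul_smul]
      rw [← h1 (f.symm (MulOpposite.op s • f 1)), f.apply_symm_apply,
        smul_comm (f.symm (MulOpposite.op r • f 1)) (MulOpposite.op s) (f 1),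
        ← h1 (f.symm (MulOpposite.op r • f 1)), f.apply_symm_apply] }
  have hg : ∀ r : R, MulOpposite.op r • f 1 = f (g r) := fun r => key r
  have hinj : Function.Injective g := g.injective
  have hsurj : Function.Surjective g := by
    intro s
    obtain ⟨r, hr⟩ := hgen (f s)
    exact ⟨r, f.injective (by rw [← hg, ← hr])⟩
  refine ⟨RingEquiv.ofBijective g ⟨hinj, hsurj⟩, fun r => by rw [hg, h1]; rfl, fun x r => ?_⟩
  show MulOpposite.op r • f x = f (x * g r)
  rw [h1 x, smul_comm, hg, h1 (g r), ← mul_smul, ← h1]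
end

section
/- Let K be a field and R a finite-dimensional central simple K-algebra. Let P be an (R,R)-bimodule on which the left and right actions of K agree (x • p = p · x for every x in the image of K in R and every p ∈ P). Suppose there is an isomorphism f : R → P of left R-modules such that p₀ := f(1) generates P as a right R-module. Then P is isomorphic to R as an (R,R)-bimodule: there exists an additive bijection e : P → R with e(r • p) = r · e(p) and e(p · r) = e(p) · r for all r ∈ R, p ∈ P. -/
open TensorProduct DirectSum

theorem clifford_aux_tensor_simple {K B C : Type*} [Field K] [Ring B] [Ring C]
    [Algebra K B] [Algebra K C] [IsSimpleRing B] [Algebra.IsCentral K B] [IsSimpleRing C] :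
    IsSimpleRing (B ⊗[K] C) := by
  classical
  set e : Module.Basis (Module.Basis.ofVectorSpaceIndex K C) K C := Module.Basis.ofVectorSpace K C with he
  set ι := Module.Basis.ofVectorSpaceIndex K C
  let E : B ⊗[K] C ≃ₗ[K] (ι →₀ B) :=
    (TensorProduct.congr (LinearEquiv.refl K B) e.repr).trans
      (TensorProduct.finsuppScalarRight K K B ι)
  have hE_tmul : ∀ (b : B) (c : C) (j : ι), E (b ⊗ₜ[K] c) j = e.repr c j • b := by
    intro b c j
    simp [E]
  have hE_basis : ∀ (b : B) (j i : ι), E (b ⊗ₜ[K] (e j)) i = if i = j then b else 0 := by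
    intro b j i
    rw [hE_tmul, e.repr_self, Finsupp.single_apply]
    by_cases h : j = i
    · subst h; simp
    · rw [if_neg h, if_neg (fun h' => h h'.symm), zero_smul]
  have hmulL : ∀ (b : B) (x : B ⊗[K] C) (j : ι), E ((b ⊗ₜ[K] (1 : C)) * x) j = b * E x j := by
    intro b x j
    induction x using TensorProduct.induction_on with
    | zero => simp
    | tmul b' c =>
        rw [Algebra.TensorProduct.tmul_mul_tmul, one_mul, hE_tmul, hE_tmul, mul_smul_comm]
    | add u v hu hv =>
        simp [mul_add, map_add, Finsupp.add_apply, hu, hv]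
  have hmulR : ∀ (b : B) (x : B ⊗[K] C) (j : ι), E (x * (b ⊗ₜ[K] (1 : C))) j = E x j * b := by
    intro b x j
    induction x using TensorProduct.induction_on with
    | zero => simp
    | tmul b' c =>
        rw [Algebra.TensorProduct.tmul_mul_tmul, mul_one, hE_tmul, hE_tmul, smul_mul_assoc]
    | add u v hu hv =>
        simp [add_mul, map_add, Finsupp.add_apply, hu, hv]
  have hone : (1 : B ⊗[K] C) = (1 : B) ⊗ₜ[K] (1 : C) := Algebra.TensorProduct.one_def
  haveI : Nontrivial (B ⊗[K] C) := by
    refine ⟨1, 0, fun h10 => ?_⟩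
    have h1 : e.repr 1 ≠ 0 := fun hr => one_ne_zero (e.repr.map_eq_zero_iff.1 hr)
    obtain ⟨j, hj⟩ := Finsupp.ne_iff.1 h1
    have h2 : e.repr 1 j • (1 : B) = 0 := by
      rw [← hE_tmul 1 1 j, ← hone, h10, map_zero, Finsupp.coe_zero, Pi.zero_apply]
    rcases smul_eq_zero.1 h2 with h | h
    · exact hj (by simpa using h)
    · exact one_ne_zero h
  refine IsSimpleRing.of_eq_bot_or_eq_top fun I => ?_
  by_cases hbot : I = ⊥
  · exact Or.inl hbot
  refine Or.inr ?_
  suffices h1I : (1 : B ⊗[K] C) ∈ I by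
    refine le_antisymm le_top fun x _ => ?_
    simpa using I.mul_mem_left x 1 h1I
  -- a nonzero element
  obtain ⟨x₀, hx₀I, hx₀⟩ : ∃ x, x ∈ I ∧ x ≠ 0 := by
    by_contra h
    push_neg at h
    exact hbot (le_antisymm (fun x hx => (TwoSidedIdeal.mem_bot _).2 (h x hx)) bot_le)
  -- minimal support
  let Q : ℕ → Prop := fun n => ∃ y, (y ∈ I ∧ y ≠ 0) ∧ (E y).support.card = n
  have hQ : ∃ n, Q n := ⟨_, x₀, ⟨hx₀I, hx₀⟩, rfl⟩
  obtain ⟨x, ⟨hxI, hx0⟩, hxcard⟩ := Nat.find_spec hQ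
  have hmin : ∀ y, y ∈ I → y ≠ 0 → Nat.find hQ ≤ (E y).support.card := fun y h1 h2 =>
    le_of_not_gt fun hlt => Nat.find_min hQ hlt ⟨y, ⟨h1, h2⟩, rfl⟩
  have hEx : E x ≠ 0 := fun h => hx0 (by simpa using E.map_eq_zero_iff.1 h)
  obtain ⟨j₀, hj₀⟩ := Finsupp.support_nonempty_iff.2 hEx
  have ha₀ : E x j₀ ≠ 0 := Finsupp.mem_support_iff.1 hj₀
  -- supports shrink under one-sided multiplication
  have hsubL : ∀ (b : B) (y : B ⊗[K] C),
      (E ((b ⊗ₜ[K] (1 : C)) * y)).support ⊆ (E y).support := by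
    intro b y j hj
    rw [Finsupp.mem_support_iff] at hj ⊢
    intro h0
    exact hj (by rw [hmulL, h0, mul_zero])
  have hsubR : ∀ (b : B) (y : B ⊗[K] C),
      (E (y * (b ⊗ₜ[K] (1 : C)))).support ⊆ (E y).support := by
    intro b y j hj
    rw [Finsupp.mem_support_iff] at hj ⊢
    intro h0
    exact hj (by rw [hmulR, h0, zero_mul])
  -- the two-sided ideal of coefficients
  let Ncar : Set B := {b | ∃ y, y ∈ I ∧ (E y).support ⊆ (E x).support ∧ E y j₀ = b}
  have Nzero : (0 : B) ∈ Ncar := ⟨0, I.zero_mem, by simp⟩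
  have Nadd : ∀ {a b : B}, a ∈ Ncar → b ∈ Ncar → a + b ∈ Ncar := by
    rintro a b ⟨y, hy, hs, rfl⟩ ⟨y', hy', hs', rfl⟩
    exact ⟨y + y', I.add_mem hy hy',
      (by rw [map_add]; exact Finsupp.support_add.trans (Finset.union_subset hs hs')),
      by rw [map_add]; rfl⟩
  have Nneg : ∀ {a : B}, a ∈ Ncar → -a ∈ Ncar := by
    rintro a ⟨y, hy, hs, rfl⟩
    exact ⟨-y, I.neg_mem hy, by rw [map_neg, Finsupp.support_neg]; exact hs,
      by rw [map_neg]; rfl⟩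
  have NmulL : ∀ {r b : B}, b ∈ Ncar → r * b ∈ Ncar := by
    rintro r b ⟨y, hy, hs, rfl⟩
    exact ⟨(r ⊗ₜ[K] (1 : C)) * y, I.mul_mem_left _ _ hy, (hsubL r y).trans hs, hmulL r y j₀⟩
  have NmulR : ∀ {b r : B}, b ∈ Ncar → b * r ∈ Ncar := by
    rintro b r ⟨y, hy, hs, rfl⟩
    exact ⟨y * (r ⊗ₜ[K] (1 : C)), I.mul_mem_right _ _ hy, (hsubR r y).trans hs, hmulR r y j₀⟩
  let N : TwoSidedIdeal B := TwoSidedIdeal.mk' Ncar Nzero Nadd Nneg NmulL NmulR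
  have ha₀N : E x j₀ ∈ N := by
    rw [TwoSidedIdeal.mem_mk']
    exact ⟨x, hxI, subset_rfl, rfl⟩
  have h1N : (1 : B) ∈ N := IsSimpleRing.one_mem_of_ne_zero_mem N ha₀ ha₀N
  rw [TwoSidedIdeal.mem_mk'] at h1N
  obtain ⟨x', hx'I, hx'sub, hx'j₀⟩ := h1N
  have hx'0 : x' ≠ 0 := fun h => one_ne_zero (α := B) (by rw [← hx'j₀, h, map_zero]; rfl)
  have hj₀' : j₀ ∈ (E x').support := Finsupp.mem_support_iff.2 (by rw [hx'j₀]; exact one_ne_zero)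
  -- all coefficients are central
  have hcomm : ∀ (r : B) (j : ι), r * E x' j = E x' j * r := by
    intro r j
    set z := (r ⊗ₜ[K] (1 : C)) * x' - x' * (r ⊗ₜ[K] (1 : C)) with hz
    have hzI : z ∈ I := I.sub_mem (I.mul_mem_left _ _ hx'I) (I.mul_mem_right _ _ hx'I)
    have hzval : ∀ i, E z i = r * E x' i - E x' i * r := by
      intro i
      rw [hz, map_sub, Finsupp.sub_apply, hmulL, hmulR]
    have hz0 : z = 0 := by
      by_contra hzne
      have hle : (E z).support ⊆ (E x').support.erase j₀ := by
        intro i hi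
        have hne : E z i ≠ 0 := Finsupp.mem_support_iff.1 hi
        rw [Finset.mem_erase]
        constructor
        · rintro rfl
          exact hne (by rw [hzval, hx'j₀, mul_one, one_mul, sub_self])
        · rw [Finsupp.mem_support_iff]
          intro h0
          exact hne (by rw [hzval, h0, mul_zero, zero_mul, sub_self])
      have hlt : (E z).support.card < Nat.find hQ :=
        lt_of_le_of_lt (Finset.card_le_card hle)
          (lt_of_lt_of_le (Finset.card_erase_lt_of_mem hj₀')
            (le_trans (Finset.card_le_card hx'sub) (le_of_eq hxcard)))
      exact absurd (hmin z hzI hzne) (not_le.2 hlt)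
    have h0 := hzval j
    rw [hz0, map_zero, Finsupp.coe_zero, Pi.zero_apply] at h0
    exact sub_eq_zero.1 h0.symm
  -- coefficients are scalars
  have hcent : ∀ j : ι, ∃ k : K, algebraMap K B k = E x' j := by
    intro j
    have hmem : E x' j ∈ Subalgebra.center K B :=
      Subalgebra.mem_center_iff.2 fun r => hcomm r j
    have := Algebra.IsCentral.out (K := K) (D := B) hmem
    rwa [Algebra.mem_bot] at this
  choose kk hkk using hcent
  set c : C := ∑ j ∈ (E x').support, kk j • e j with hc
  have hx'eq : x' = (1 : B) ⊗ₜ[K] c := by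
    refine E.injective (Finsupp.ext fun i => ?_)
    have hexp : (1 : B) ⊗ₜ[K] c = ∑ j ∈ (E x').support, kk j • ((1 : B) ⊗ₜ[K] e j) := by
      rw [hc, tmul_sum]
      exact Finset.sum_congr rfl fun j _ => tmul_smul (kk j) (1 : B) (e j)
    rw [hexp, map_sum]
    rw [Finsupp.finset_sum_apply]
    have hterm : ∀ j ∈ (E x').support,
        (E (kk j • ((1 : B) ⊗ₜ[K] e j))) i = if i = j then kk j • (1 : B) else 0 := by
      intro j _
      rw [map_smul, Finsupp.smul_apply, hE_basis]
      by_cases h : i = j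
      · rw [if_pos h, if_pos h]
      · rw [if_neg h, if_neg h, smul_zero]
    rw [Finset.sum_congr rfl hterm, Finset.sum_ite_eq]
    by_cases hi : i ∈ (E x').support
    · rw [if_pos hi, ← Algebra.algebraMap_eq_smul_one, hkk]
    · rw [if_neg hi, Finsupp.notMem_support_iff.1 hi]
  have hc0 : c ≠ 0 := by
    intro h
    rw [h, tmul_zero] at hx'eq
    exact hx'0 hx'eq
  -- final two-sided ideal in C
  let Jcar : Set C := {c' | (1 : B) ⊗ₜ[K] c' ∈ I}
  have Jzero : (0 : C) ∈ Jcar := by simp only [Jcar, Set.mem_setOf_eq, tmul_zero]; exact I.zero_mem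
  have Jadd : ∀ {a b : C}, a ∈ Jcar → b ∈ Jcar → a + b ∈ Jcar := by
    intro a b ha hb
    simp only [Jcar, Set.mem_setOf_eq, tmul_add]
    exact I.add_mem ha hb
  have Jneg : ∀ {a : C}, a ∈ Jcar → -a ∈ Jcar := by
    intro a ha
    simp only [Jcar, Set.mem_setOf_eq, tmul_neg]
    exact I.neg_mem ha
  have JmulL : ∀ {s a : C}, a ∈ Jcar → s * a ∈ Jcar := by
    intro s a ha
    have : (1 : B) ⊗ₜ[K] (s * a) = ((1 : B) ⊗ₜ[K] s) * ((1 : B) ⊗ₜ[K] a) := by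
      rw [Algebra.TensorProduct.tmul_mul_tmul, one_mul]
    show (1 : B) ⊗ₜ[K] (s * a) ∈ I
    rw [this]
    exact I.mul_mem_left _ _ ha
  have JmulR : ∀ {a s : C}, a ∈ Jcar → a * s ∈ Jcar := by
    intro a s ha
    have : (1 : B) ⊗ₜ[K] (a * s) = ((1 : B) ⊗ₜ[K] a) * ((1 : B) ⊗ₜ[K] s) := by
      rw [Algebra.TensorProduct.tmul_mul_tmul, one_mul]
    show (1 : B) ⊗ₜ[K] (a * s) ∈ I
    rw [this]
    exact I.mul_mem_right _ _ ha
  let J : TwoSidedIdeal C := TwoSidedIdeal.mk' Jcar Jzero Jadd Jneg JmulL JmulR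
  have hcJ : c ∈ J := by
    rw [TwoSidedIdeal.mem_mk']
    show (1 : B) ⊗ₜ[K] c ∈ I
    rw [← hx'eq]
    exact hx'I
  have h1J : (1 : C) ∈ J := IsSimpleRing.one_mem_of_ne_zero_mem J hc0 hcJ
  rw [TwoSidedIdeal.mem_mk'] at h1J
  rw [hone]
  exact h1J

theorem clifford_aux_op_simple {R : Type*} [Ring R] [IsSimpleRing R] : IsSimpleRing Rᵐᵒᵖ where
  simple := by
    have e : TwoSidedIdeal Rᵐᵒᵖ ≃o TwoSidedIdeal R :=
      (TwoSidedIdeal.orderIsoRingCon).trans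
        ((RingCon.opOrderIso (R := R)).symm.trans TwoSidedIdeal.orderIsoRingCon.symm)
    exact e.isSimpleOrder

theorem clifford_aux_simple_iso {A : Type*} [Ring A] [IsSimpleRing A] (W : Submodule A A)
    [IsSimpleModule A W] (T : Type*) [AddCommGroup T] [Module A T] [IsSimpleModule A T] :
    Nonempty (W ≃ₗ[A] T) := by
  haveI : Nontrivial T := IsSimpleModule.nontrivial A T
  haveI : Nontrivial W := IsSimpleModule.nontrivial A W
  obtain ⟨w, hw0⟩ := exists_ne (0 : W)
  have hex : ∃ (u : W) (t : T), (u : A) • t ≠ 0 := by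
    by_contra h
    push_neg at h
    let Ann : TwoSidedIdeal A := TwoSidedIdeal.mk' {a | ∀ t : T, a • t = 0}
      (fun t => by rw [zero_smul])
      (fun h1 h2 t => by rw [add_smul, h1, h2, add_zero])
      (fun h1 t => by rw [neg_smul, h1, neg_zero])
      (fun {x y} h1 t => by rw [mul_smul, h1, smul_zero])
      (fun {x y} h1 t => by rw [mul_smul, h1])
    have hwA : (w : A) ∈ Ann := by
      rw [TwoSidedIdeal.mem_mk']
      exact fun t => h w t
    have hw0' : (w : A) ≠ 0 := fun hh => hw0 (Subtype.ext hh)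
    have h1 : (1 : A) ∈ Ann := IsSimpleRing.one_mem_of_ne_zero_mem Ann hw0' hwA
    rw [TwoSidedIdeal.mem_mk'] at h1
    obtain ⟨t, t', htt⟩ := exists_pair_ne T
    apply htt
    have ht := h1 t
    have ht' := h1 t'
    rw [one_smul] at ht ht'
    rw [ht, ht']
  obtain ⟨u, t, hut⟩ := hex
  let φ : W →ₗ[A] T :=
    { toFun := fun v => (v : A) • t
      map_add' := fun v v' => by simp only [Submodule.coe_add, add_smul]
      map_smul' := fun a v => by
        simp only [RingHom.id_apply, Submodule.coe_smul, smul_eq_mul, mul_smul] }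
  have hφ : φ ≠ 0 := fun h => hut (by rw [show ((u : A) • t) = φ u from rfl, h]; rfl)
  exact ⟨LinearEquiv.ofBijective φ (LinearMap.bijective_of_ne_zero hφ)⟩

theorem clifford_aux_semisimple {K A : Type*} [Field K] [Ring A] [Algebra K A]
    [FiniteDimensional K A] [IsSimpleRing A] : IsSemisimpleRing A := by
  haveI : IsArtinian A A := isArtinian_of_tower K inferInstance
  set T : Submodule A A := sSup {m : Submodule A A | IsSimpleModule A m} with hT
  have key : ∀ a : A, T.map (LinearMap.toSpanSingleton A A a) ≤ T := by
    intro a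
    rw [hT, sSup_eq_iSup', Submodule.map_iSup]
    refine iSup_le fun m => ?_
    obtain ⟨m, hm⟩ := m
    haveI : IsSimpleModule A m := hm
    set φ := (LinearMap.toSpanSingleton A A a).comp m.subtype with hφ
    have hrange : Submodule.map (LinearMap.toSpanSingleton A A a) m = LinearMap.range φ := by
      rw [hφ, LinearMap.range_comp, Submodule.range_subtype]
    rcases eq_or_ne φ 0 with h0 | h0
    · rw [hrange, h0, LinearMap.range_zero]; exact bot_le
    · haveI : IsSimpleModule A (LinearMap.range φ) :=
        IsSimpleModule.congr (LinearEquiv.ofInjective φ (LinearMap.injective_of_ne_zero h0)).symm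
      rw [hrange]
      exact le_iSup_of_le ⟨LinearMap.range φ, this⟩ le_rfl
  have hTmul : ∀ x ∈ T, ∀ a : A, x * a ∈ T := by
    intro x hx a
    refine key a ⟨x, hx, ?_⟩
    rw [LinearMap.toSpanSingleton_apply, smul_eq_mul]
  let I : TwoSidedIdeal A := TwoSidedIdeal.mk' (T : Set A) T.zero_mem
    (fun h1 h2 => T.add_mem h1 h2) (fun h => T.neg_mem h)
    (fun {x y} h => by simpa [smul_eq_mul] using T.smul_mem x h)
    (fun {x y} h => hTmul x h y)
  haveI : IsAtomic (Submodule A A) := isAtomic_of_orderBot_wellFounded_lt wellFounded_lt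
  obtain ⟨W, hW⟩ := IsAtomic.exists_atom (Submodule A A)
  haveI hWs : IsSimpleModule A W := isSimpleModule_iff_isAtom.mpr hW
  have hWT : W ≤ T := le_sSup hWs
  obtain ⟨w, hwW, hw0⟩ := (Submodule.ne_bot_iff W).1 hW.1
  have hwI : w ∈ I := by rw [TwoSidedIdeal.mem_mk']; exact hWT hwW
  have h1 : (1 : A) ∈ I := IsSimpleRing.one_mem_of_ne_zero_mem I hw0 hwI
  rw [TwoSidedIdeal.mem_mk'] at h1
  have hTtop : T = ⊤ := by
    rw [eq_top_iff]
    intro x _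
    simpa [smul_eq_mul] using T.smul_mem x h1
  exact sSup_simples_eq_top_iff_isSemisimpleModule.mp hTtop

theorem clifford_aux_decomp {K A M : Type*} [Field K] [Ring A] [Algebra K A]
    [IsSimpleRing A] [IsSemisimpleRing A]
    [AddCommGroup M] [Module A M] [Module K M] [IsScalarTower K A M] [Module.Finite K M]
    (W : Submodule A A) [IsSimpleModule A W] [Module.Finite K W] :
    ∃ n : ℕ, Nonempty (M ≃ₗ[A] (Fin n → W)) ∧
      Module.finrank K M = n * Module.finrank K W := by
  classical
  haveI : IsArtinian A M := isArtinian_of_tower K inferInstance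
  obtain ⟨s, hind, hsup, hsimp⟩ := IsSemisimpleModule.exists_sSupIndep_sSup_simples_eq_top A M
  have hsfin : s.Finite := WellFoundedLT.finite_of_sSupIndep hind
  letI := hsfin.fintype
  let F : s → Submodule A M := fun m => (m : Submodule A M)
  have hinternal : DirectSum.IsInternal F := by
    rw [DirectSum.isInternal_submodule_iff_iSupIndep_and_iSup_eq_top]
    exact ⟨(sSupIndep_iff s).1 hind, by rw [← sSup_eq_iSup']; exact hsup⟩
  let e1 : (⨁ (m : s), ↥(F m)) ≃ₗ[A] M :=
    LinearEquiv.ofBijective (DirectSum.coeLinearMap _) hinternal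
  have isos : ∀ m : s, Nonempty ((W : Type _) ≃ₗ[A] ↥(F m)) := fun m => by
    haveI : IsSimpleModule A ↥(F m) := hsimp m m.2
    exact clifford_aux_simple_iso W _
  let e2 : (⨁ (m : s), ↥(F m)) ≃ₗ[A] ((m : s) → ↥(F m)) :=
    DirectSum.linearEquivFunOnFintype A s _
  let e3 : ((m : s) → ↥(F m)) ≃ₗ[A] ((m : s) → W) :=
    LinearEquiv.piCongrRight fun m => ((isos m).some).symm
  let e4 : ((m : s) → W) ≃ₗ[A] (Fin (Fintype.card s) → W) :=
    LinearEquiv.funCongrLeft A W (Fintype.equivFin s).symm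
  have e5 : M ≃ₗ[A] (Fin (Fintype.card s) → W) := e1.symm.trans (e2.trans (e3.trans e4))
  refine ⟨Fintype.card s, ⟨e5⟩, ?_⟩
  have eK : M ≃ₗ[K] (Fin (Fintype.card s) → W) := e5.restrictScalars K
  rw [eK.finrank_eq, Module.finrank_pi_fintype, Finset.sum_const, Finset.card_univ,
    Fintype.card_fin, smul_eq_mul]

theorem clifford_aux_iso {K A M N : Type*} [Field K] [Ring A] [Algebra K A]
    [FiniteDimensional K A] [IsSimpleRing A]
    [AddCommGroup M] [Module A M] [Module K M] [IsScalarTower K A M] [Module.Finite K M]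
    [AddCommGroup N] [Module A N] [Module K N] [IsScalarTower K A N] [Module.Finite K N]
    (h : Module.finrank K M = Module.finrank K N) : Nonempty (M ≃ₗ[A] N) := by
  haveI : IsSemisimpleRing A := clifford_aux_semisimple (K := K) (A := A)
  haveI : IsArtinian A A := isArtinian_of_tower K inferInstance
  haveI : IsAtomic (Submodule A A) := isAtomic_of_orderBot_wellFounded_lt wellFounded_lt
  obtain ⟨W, hW⟩ := IsAtomic.exists_atom (Submodule A A)
  haveI : IsSimpleModule A W := isSimpleModule_iff_isAtom.mpr hW
  haveI : Module.Finite K W :=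
    FiniteDimensional.of_injective (W.subtype.restrictScalars K) W.injective_subtype
  haveI : Nontrivial W := IsSimpleModule.nontrivial A W
  obtain ⟨n, ⟨eM⟩, hn⟩ := clifford_aux_decomp (K := K) (M := M) W
  obtain ⟨m, ⟨eN⟩, hm⟩ := clifford_aux_decomp (K := K) (M := N) W
  have hd : 0 < Module.finrank K W := Module.finrank_pos
  have hnm : n = m := Nat.eq_of_mul_eq_mul_right hd (by rw [← hn, ← hm, h])
  subst hnm
  exact ⟨eM.trans eN.symm⟩

/-- Paper: Lemma 7.2(2).
Let `K` be a field and `R` a finite-dimensional central simple `K`-algebra.  Let `P` be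
an `(R,R)`-bimodule on which the left and right actions of `K` agree.  If `f : R ≃ₗ[R] P`
is an isomorphism of left `R`-modules such that `p₀ := f 1` generates `P` as a right
`R`-module, then `P` is isomorphic to `R` as an `(R,R)`-bimodule: there is an additive
bijection `e : P → R` with `e (r • p) = r * e p` and `e (p · r) = e p * r`. -/
theorem clifford_stmt1 {K R P : Type*} [Field K] [Ring R] [Algebra K R]
    [FiniteDimensional K R] [IsSimpleRing R] [Algebra.IsCentral K R]
    [AddCommGroup P] [Module R P] [Module Rᵐᵒᵖ P] [SMulCommClass R Rᵐᵒᵖ P]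
    (hK : ∀ (x : K) (p : P),
      algebraMap K R x • p = MulOpposite.op (algebraMap K R x) • p)
    (f : R ≃ₗ[R] P)
    (hgen : ∀ p : P, ∃ r : R, p = MulOpposite.op r • f 1) :
    ∃ e : P ≃+ R, ∀ (r : R) (p : P),
      e (r • p) = r * e p ∧ e (MulOpposite.op r • p) = e p * r := by
  classical
  letI instKP : Module K P := Module.compHom P (algebraMap K R)
  have hKsmul : ∀ (x : K) (p : P), x • p = algebraMap K R x • p := fun _ _ => rfl
  haveI t1 : IsScalarTower K R P := ⟨fun x r p => by
    rw [hKsmul, Algebra.smul_def, mul_smul]⟩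
  haveI t2 : IsScalarTower K Rᵐᵒᵖ P := ⟨fun x b p => by
    rw [hKsmul, hK]
    induction b using MulOpposite.rec' with
    | _ r =>
      have hxb : x • MulOpposite.op r = MulOpposite.op (algebraMap K R x * r) := by
        rw [← MulOpposite.op_smul, Algebra.smul_def]
      rw [hxb, show MulOpposite.op (algebraMap K R x * r)
          = MulOpposite.op r * MulOpposite.op (algebraMap K R x) from rfl, mul_smul,
        ← hK, ← hK]
      exact (smul_comm (algebraMap K R x) (MulOpposite.op r) p).symm⟩
  letI instAP : Module (R ⊗[K] Rᵐᵒᵖ) P := TensorProduct.Algebra.module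
  letI instAR : Module (R ⊗[K] Rᵐᵒᵖ) R := TensorProduct.Algebra.module
  haveI : IsSimpleRing Rᵐᵒᵖ := clifford_aux_op_simple
  haveI : IsSimpleRing (R ⊗[K] Rᵐᵒᵖ) := clifford_aux_tensor_simple
  haveI tAP : IsScalarTower K (R ⊗[K] Rᵐᵒᵖ) P := ⟨fun x a p => by
    show TensorProduct.Algebra.moduleAux (x • a) p = x • TensorProduct.Algebra.moduleAux a p
    rw [map_smul, LinearMap.smul_apply]⟩
  haveI tAR : IsScalarTower K (R ⊗[K] Rᵐᵒᵖ) R := ⟨fun x a r => by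
    show TensorProduct.Algebra.moduleAux (x • a) r = x • TensorProduct.Algebra.moduleAux a r
    rw [map_smul, LinearMap.smul_apply]⟩
  have fK : R ≃ₗ[K] P := f.restrictScalars K
  haveI : Module.Finite K P := Module.Finite.equiv fK
  have hrank : Module.finrank K P = Module.finrank K R := fK.symm.finrank_eq
  obtain ⟨g⟩ := clifford_aux_iso (K := K) (A := R ⊗[K] Rᵐᵒᵖ) (M := P) (N := R) hrank
  have hsmulP : ∀ (r : R) (p : P), (r ⊗ₜ[K] (1 : Rᵐᵒᵖ)) • p = r • p := fun r p => by
    rw [TensorProduct.Algebra.smul_def, one_smul]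
  have hsmulP' : ∀ (r : R) (p : P), ((1 : R) ⊗ₜ[K] MulOpposite.op r) • p
      = MulOpposite.op r • p := fun r p => by
    rw [TensorProduct.Algebra.smul_def, one_smul]
  have hsmulR : ∀ (r x : R), (r ⊗ₜ[K] (1 : Rᵐᵒᵖ)) • x = r * x := fun r x => by
    rw [TensorProduct.Algebra.smul_def, one_smul, smul_eq_mul]
  have hsmulR' : ∀ (r x : R), ((1 : R) ⊗ₜ[K] MulOpposite.op r) • x = x * r := fun r x => by
    rw [TensorProduct.Algebra.smul_def, one_smul, MulOpposite.smul_eq_mul_unop,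
      MulOpposite.unop_op]
  refine ⟨g.toAddEquiv, fun r p => ⟨?_, ?_⟩⟩
  · show g (r • p) = r * g p
    rw [← hsmulP, ← hsmulR r (g p)]
    exact g.map_smul _ p
  · show g (MulOpposite.op r • p) = g p * r
    rw [← hsmulP', ← hsmulR' r (g p)]
    exact g.map_smul _ p
end

section
/- Let K be a field, let R and R' be finite-dimensional central simple K-algebras, and let ψ : R → R' be a K-algebra isomorphism. Let η be a ring automorphism of R and η' a ring automorphism of R' which induce the same automorphism of K, i.e., η(algebraMap K R x) = algebraMap K R (σ x) and η'(algebraMap K R' x) = algebraMap K R' (σ x) for all x ∈ K, for one and the same field automorphism σ of K. Then there exists a unit u ∈ Rˣ such that ψ(η(u r u⁻¹)) = η'(ψ(r)) for all r ∈ R. -/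
open Finset Pointwise in
/-- Key lemma: in a central simple algebra, if `∑ i ∈ s, a i * x * b i = 0` for all `x`,
with `b` linearly independent, then all `a i = 0`. -/
theorem csa_key {K A ι : Type*} [Field K] [Ring A] [Algebra K A]
    [IsSimpleRing A] [Algebra.IsCentral K A] {b : ι → A}
    (hb : LinearIndependent K b) (s : Finset ι) :
    ∀ a : ι → A, (∀ x : A, ∑ i ∈ s, a i * x * b i = 0) → ∀ i ∈ s, a i = 0 := by
  classical
  induction s using Finset.strongInduction with
  | _ s ih =>
  intro a ha
  by_contra hcon
  push_neg at hcon
  obtain ⟨j, hjs, haj⟩ := hcon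
  -- 1 is in the two-sided ideal generated by `a j`
  have h1 : (1 : A) ∈ TwoSidedIdeal.span {a j} :=
    IsSimpleRing.one_mem_of_ne_zero_mem _ haj (TwoSidedIdeal.subset_span rfl)
  rw [TwoSidedIdeal.mem_span_iff_mem_addSubgroup_closure] at h1
  -- the set of possible `j`-th entries of families satisfying the relation
  set S : AddSubgroup A :=
    { carrier := { e : A | ∃ a' : ι → A, a' j = e ∧ ∀ x : A, ∑ i ∈ s, a' i * x * b i = 0 }
      add_mem' := by
        rintro e₁ e₂ ⟨f₁, rfl, h₁⟩ ⟨f₂, rfl, h₂⟩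
        exact ⟨f₁ + f₂, rfl, fun x => by
          simp only [Pi.add_apply, add_mul, Finset.sum_add_distrib, h₁ x, h₂ x, add_zero]⟩
      zero_mem' := ⟨0, rfl, fun x => by simp⟩
      neg_mem' := by
        rintro e ⟨f, rfl, h⟩
        exact ⟨-f, rfl, fun x => by
          simp only [Pi.neg_apply, neg_mul, Finset.sum_neg_distrib, h x, neg_zero]⟩ } with hS
  have hsub : (Set.univ * {a j} * Set.univ : Set A) ⊆ S := by
    rintro - ⟨-, ⟨c, -, y, rfl : y = a j, rfl⟩, d, -, rfl⟩
    refine ⟨fun i => c * a i * d, rfl, fun x => ?_⟩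
    have hd := ha (d * x)
    calc ∑ i ∈ s, c * a i * d * x * b i = c * ∑ i ∈ s, a i * (d * x) * b i := by
          rw [Finset.mul_sum]; congr 1; ext i; noncomm_ring
      _ = 0 := by rw [hd, mul_zero]
  have h1S : (1 : A) ∈ S := (AddSubgroup.closure_le (K := S)).mpr hsub h1
  obtain ⟨a', ha'j, ha'⟩ := h1S
  -- each `a' i` is central
  have hcomm : ∀ y : A, ∀ i ∈ s, y * a' i = a' i * y := by
    intro y i hi
    rcases eq_or_ne i j with rfl | hij
    · rw [ha'j, mul_one, one_mul]
    · have hrel : ∀ x : A, ∑ k ∈ s.erase j, (y * a' k - a' k * y) * x * b k = 0 := by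
        intro x
        have h2 : ∑ k ∈ s, (y * a' k - a' k * y) * x * b k = 0 := by
          have e1 : ∑ k ∈ s, y * (a' k * x * b k) = 0 := by
            rw [← Finset.mul_sum, ha' x, mul_zero]
          have e2 : ∑ k ∈ s, a' k * (y * x) * b k = 0 := ha' (y * x)
          calc ∑ k ∈ s, (y * a' k - a' k * y) * x * b k
              = ∑ k ∈ s, (y * (a' k * x * b k) - a' k * (y * x) * b k) := by
                congr 1; ext k; noncomm_ring
            _ = 0 := by rw [Finset.sum_sub_distrib, e1, e2, sub_zero]
        rw [← h2]
        refine Finset.sum_subset (Finset.erase_subset j s) fun k hk hnk => ?_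
        have : k = j := by
          by_contra hne
          exact hnk (Finset.mem_erase.mpr ⟨hne, hk⟩)
        subst this
        rw [ha'j, mul_one, one_mul, sub_self, zero_mul, zero_mul]
      have := ih (s.erase j) (Finset.erase_ssubset hjs)
        (fun k => y * a' k - a' k * y) hrel i (Finset.mem_erase.mpr ⟨hij, hi⟩)
      exact sub_eq_zero.mp this
  -- hence each `a' i` is a scalar
  have hK : ∀ i ∈ s, ∃ k : K, a' i = k • (1 : A) := by
    intro i hi
    have hc : a' i ∈ Subalgebra.center K A :=
      Subalgebra.mem_center_iff.mpr fun y => hcomm y i hi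
    have := Algebra.IsCentral.out (K := K) (D := A) hc
    rw [Algebra.mem_bot] at this
    obtain ⟨k, hk⟩ := this
    exact ⟨k, by rw [← hk, Algebra.algebraMap_eq_smul_one]⟩
  choose kk hkk using hK
  -- evaluate at x = 1 and use linear independence
  have hzero : ∑ i ∈ s.attach, kk i i.2 • b i = 0 := by
    have := ha' 1
    calc ∑ i ∈ s.attach, kk i i.2 • b (i : ι)
        = ∑ i ∈ s.attach, a' i * 1 * b (i : ι) := by
          refine Finset.sum_congr rfl fun i _ => ?_
          rw [hkk i i.2, mul_one, smul_mul_assoc, one_mul]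
      _ = ∑ i ∈ s, a' i * 1 * b i := Finset.sum_attach s (fun i => a' i * 1 * b i)
      _ = 0 := ha' 1
  have hall : ∀ i (h : i ∈ s), kk i h = 0 := by
    have hinj : Function.Injective (fun i : {x // x ∈ s} => (i : ι)) := Subtype.val_injective
    have hb' : LinearIndependent K (fun i : {x // x ∈ s} => b i) := hb.comp _ hinj
    rw [linearIndependent_iff'] at hb'
    intro i hi
    exact hb' s.attach (fun i => kk i i.2) hzero ⟨i, hi⟩ (Finset.mem_attach _ _)
  have : a' j = 0 := by rw [hkk j hjs, hall j hjs, zero_smul]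
  rw [ha'j] at this
  exact one_ne_zero this

section PsiAux
variable {K A ι : Type*} [Field K] [Ring A] [Algebra K A] [Fintype ι]

/-- `x ↦ ∑ i, f (g i) * x * b i` as a linear map in `g`. -/
noncomputable def PsiAux (f : A ≃ₐ[K] A) (b : ι → A) : (ι → A) →ₗ[K] Module.End K A where
  toFun g := ∑ i, (LinearMap.mulRight K (b i)) ∘ₗ (LinearMap.mulLeft K (f (g i)))
  map_add' g h := by
    ext x
    simp [add_mul, Finset.sum_add_distrib]
  map_smul' k g := by
    ext x
    simp [Finset.smul_sum, smul_mul_assoc]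

lemma PsiAux_apply (f : A ≃ₐ[K] A) (b : ι → A) (g : ι → A) (x : A) :
    PsiAux f b g x = ∑ i, f (g i) * x * b i := by
  simp [PsiAux, mul_assoc]

end PsiAux

open Module in
theorem skolem_noether_auto {K A : Type*} [Field K] [Ring A] [Algebra K A]
    [FiniteDimensional K A] [IsSimpleRing A] [Algebra.IsCentral K A]
    (f : A ≃ₐ[K] A) : ∃ u : Aˣ, ∀ a : A, f a = u * a * ((u⁻¹ : Aˣ) : A) := by
  classical
  set n := finrank K A with hn
  set b : Basis (Fin n) K A := Module.finBasis K A with hb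
  -- injectivity of the (possibly twisted) structure maps
  have hinj : ∀ f' : A ≃ₐ[K] A, Function.Injective (PsiAux f' b) := by
    intro f'
    rw [injective_iff_map_eq_zero]
    intro g hg
    have h0 : ∀ x : A, ∑ i, f' (g i) * x * b i = 0 := by
      intro x
      have := congrArg (fun z : Module.End K A => z x) hg
      simpa [PsiAux_apply] using this
    funext i
    have := csa_key b.linearIndependent Finset.univ (fun i => f' (g i))
      (by simpa using h0) i (Finset.mem_univ i)
    simpa using f'.injective (by simpa using this)
  -- equality of finranks
  have hfr : finrank K (Fin n → A) = finrank K (Module.End K A) := by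
    rw [Module.finrank_linearMap]
    rw [Module.finrank_pi_fintype, Finset.sum_const, Finset.card_univ, Fintype.card_fin,
      smul_eq_mul]
  -- surjectivity
  have hsurj : ∀ f' : A ≃ₐ[K] A, Function.Surjective (PsiAux f' b) := by
    intro f'
    rw [← LinearMap.range_eq_top]
    rw [← LinearMap.ker_eq_bot_iff_range_eq_top_of_finrank_eq_finrank hfr,
      LinearMap.ker_eq_bot]
    exact hinj f'
  set Psi := PsiAux (AlgEquiv.refl : A ≃ₐ[K] A) b with hPsi
  set e : (Fin n → A) ≃ₗ[K] Module.End K A :=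
    LinearEquiv.ofBijective Psi ⟨hinj _, hsurj _⟩ with he
  set θ : Module.End K A →ₗ[K] Module.End K A :=
    (PsiAux f b) ∘ₗ (e.symm : Module.End K A →ₗ[K] (Fin n → A)) with hθ
  have hθbij : Function.Bijective θ := by
    constructor
    · exact (hinj f).comp e.symm.injective
    · exact (hsurj f).comp e.symm.surjective
  -- the characterizing property
  have hP : ∀ c d : A,
      θ ((LinearMap.mulRight K d) ∘ₗ (LinearMap.mulLeft K c))
        = (LinearMap.mulRight K d) ∘ₗ (LinearMap.mulLeft K (f c)) := by
    intro c d
    set g : Fin n → A := fun i => b.repr d i • c with hg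
    have h1 : Psi g = (LinearMap.mulRight K d) ∘ₗ (LinearMap.mulLeft K c) := by
      ext x
      rw [hPsi]
      simp only [LinearMap.coe_comp, Function.comp_apply, LinearMap.mulLeft_apply,
        LinearMap.mulRight_apply]
      calc PsiAux (AlgEquiv.refl : A ≃ₐ[K] A) b g x
          = ∑ i, (b.repr d i • c) * x * b i := by rw [PsiAux_apply]; rfl
        _ = c * x * ∑ i, b.repr d i • b i := by
            rw [Finset.mul_sum]
            refine Finset.sum_congr rfl fun i _ => ?_
            rw [smul_mul_assoc, smul_mul_assoc, mul_smul_comm]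
        _ = c * x * d := by rw [b.sum_repr]
    have h2 : PsiAux f b g = (LinearMap.mulRight K d) ∘ₗ (LinearMap.mulLeft K (f c)) := by
      ext x
      simp only [LinearMap.coe_comp, Function.comp_apply, LinearMap.mulLeft_apply,
        LinearMap.mulRight_apply]
      calc PsiAux f b g x
          = ∑ i, f (b.repr d i • c) * x * b i := by rw [PsiAux_apply]
        _ = ∑ i, (b.repr d i • f c) * x * b i := by
            refine Finset.sum_congr rfl fun i _ => ?_
            rw [map_smul]
        _ = f c * x * ∑ i, b.repr d i • b i := by
            rw [Finset.mul_sum]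
            refine Finset.sum_congr rfl fun i _ => ?_
            rw [smul_mul_assoc, smul_mul_assoc, mul_smul_comm]
        _ = f c * x * d := by rw [b.sum_repr]
    rw [hθ]
    have : e.symm ((LinearMap.mulRight K d) ∘ₗ (LinearMap.mulLeft K c)) = g := by
      rw [← h1]
      exact e.symm_apply_apply g
    simp only [LinearMap.coe_comp, Function.comp_apply, LinearEquiv.coe_coe, this]
    exact h2
  -- every endomorphism is a span of maps `x ↦ c * x * d`
  set Gen : Set (Module.End K A) :=
    {w : Module.End K A | ∃ c d : A, w = (LinearMap.mulRight K d) ∘ₗ (LinearMap.mulLeft K c)}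
    with hGen
  have hspan : ∀ z : Module.End K A, z ∈ Submodule.span K Gen := by
    intro z
    obtain ⟨g, rfl⟩ := hsurj (AlgEquiv.refl) z
    have : PsiAux (AlgEquiv.refl : A ≃ₐ[K] A) b g
        = ∑ i, (LinearMap.mulRight K (b i)) ∘ₗ (LinearMap.mulLeft K (g i)) := by
      simp [PsiAux]
    rw [this]
    exact Submodule.sum_mem _ fun i _ =>
      Submodule.subset_span ⟨g i, b i, rfl⟩
  -- multiplicativity of θ
  have hgenmul : ∀ c d c' d' : A,
      ((LinearMap.mulRight K d) ∘ₗ (LinearMap.mulLeft K c)) ∘ₗ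
        ((LinearMap.mulRight K d') ∘ₗ (LinearMap.mulLeft K c'))
      = (LinearMap.mulRight K (d' * d)) ∘ₗ (LinearMap.mulLeft K (c * c')) := by
    intro c d c' d'
    ext x
    simp only [LinearMap.coe_comp, Function.comp_apply, LinearMap.mulLeft_apply,
      LinearMap.mulRight_apply]
    noncomm_ring
  have hmul : ∀ z w : Module.End K A, θ (z ∘ₗ w) = θ z ∘ₗ θ w := by
    intro z w
    induction hspan z, hspan w using Submodule.span_induction₂ with
    | mem_mem z w hz hw =>
      obtain ⟨c, d, rfl⟩ := hz
      obtain ⟨c', d', rfl⟩ := hw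
      rw [hgenmul, hP, hP, hP, map_mul, ← hgenmul]
    | zero_left w hw => simp [LinearMap.comp_zero, LinearMap.zero_comp]
    | zero_right z hz => simp [LinearMap.comp_zero, LinearMap.zero_comp]
    | add_left z₁ z₂ w hz₁ hz₂ hw h₁ h₂ =>
      rw [LinearMap.add_comp, map_add, map_add, h₁, h₂, LinearMap.add_comp]
    | add_right z w₁ w₂ hz hw₁ hw₂ h₁ h₂ =>
      rw [LinearMap.comp_add, map_add, map_add, h₁, h₂, LinearMap.comp_add]
    | smul_left k z w hz hw h =>
      rw [LinearMap.smul_comp, map_smul, map_smul, h, LinearMap.smul_comp]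
    | smul_right k z w hz hw h =>
      rw [LinearMap.comp_smul, map_smul, map_smul, h, LinearMap.comp_smul]
  -- invariant subspaces under all endomorphisms are trivial
  have hInv : ∀ W : Submodule K A,
      (∀ (z : Module.End K A) (w : A), w ∈ W → z w ∈ W) → W = ⊥ ∨ W = ⊤ := by
    intro W hW
    rcases eq_or_ne W ⊥ with h | h
    · exact Or.inl h
    · refine Or.inr (Submodule.eq_top_iff'.mpr fun v => ?_)
      obtain ⟨w, hwW, hw0⟩ := Submodule.exists_mem_ne_zero_of_ne_bot h
      have hts : LinearMap.ker (LinearMap.toSpanSingleton K A w) = ⊥ := by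
        rw [LinearMap.ker_eq_bot]
        intro k₁ k₂ hk
        simp only [LinearMap.toSpanSingleton_apply] at hk
        by_contra hne
        have : (k₁ - k₂) • w = 0 := by rw [sub_smul, hk, sub_self]
        rcases smul_eq_zero.mp this with h' | h'
        · exact hne (sub_eq_zero.mp h')
        · exact hw0 h'
      obtain ⟨c, hc⟩ := (LinearMap.toSpanSingleton K A w).exists_leftInverse_of_injective hts
      have hcw : c w = 1 := by
        have := congrArg (fun z : K →ₗ[K] K => z 1) hc
        simpa using this
      have := hW (c.smulRight v) w hwW
      simpa [LinearMap.smulRight_apply, hcw] using this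
  -- a projection onto `K • 1`
  have h10 : (1 : A) ≠ 0 := one_ne_zero
  have hts1 : LinearMap.ker (LinearMap.toSpanSingleton K A 1) = ⊥ := by
    rw [LinearMap.ker_eq_bot]
    intro k₁ k₂ hk
    simp only [LinearMap.toSpanSingleton_apply] at hk
    by_contra hne
    have : (k₁ - k₂) • (1 : A) = 0 := by rw [sub_smul, hk, sub_self]
    rcases smul_eq_zero.mp this with h' | h'
    · exact hne (sub_eq_zero.mp h')
    · exact h10 h'
  obtain ⟨c, hc⟩ := (LinearMap.toSpanSingleton K A 1).exists_leftInverse_of_injective hts1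
  have hc1 : c 1 = 1 := by
    have := congrArg (fun z : K →ₗ[K] K => z 1) hc
    simpa using this
  set p : Module.End K A := c.smulRight 1 with hp
  have hpp : p ∘ₗ p = p := by
    ext x
    simp [hp, hc1]
  set q : Module.End K A := θ p with hq
  have hqq : q ∘ₗ q = q := by rw [hq, ← hmul, hpp]
  have hq0 : q ≠ 0 := by
    intro h0
    have : p = 0 := by
      have := hθbij.injective (a₁ := p) (a₂ := 0) (by rw [map_zero, ← hq, h0])
      exact this
    have := congrArg (fun z : Module.End K A => z 1) this
    simp [hp, hc1] at this
  obtain ⟨w₁, hw₁⟩ : ∃ w₁ : A, q w₁ ≠ 0 := by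
    by_contra hcon
    push_neg at hcon
    exact hq0 (LinearMap.ext fun x => by rw [hcon x]; rfl)
  set w₀ : A := q w₁ with hw₀
  have hqw₀ : q w₀ = w₀ := by
    rw [hw₀, ← LinearMap.comp_apply, hqq]
  -- the intertwining map g
  set G : A →ₗ[K] A :=
    { toFun := fun v => θ (c.smulRight v) w₀
      map_add' := fun v v' => by
        have h : c.smulRight (v + v') = c.smulRight v + c.smulRight v' := by
          ext x; simp [smul_add]
        show θ (c.smulRight (v + v')) w₀ = θ (c.smulRight v) w₀ + θ (c.smulRight v') w₀
        rw [h, map_add]; rfl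
      map_smul' := fun k v => by
        have h : c.smulRight (k • v) = k • c.smulRight v := by
          ext x
          simp only [LinearMap.smulRight_apply, LinearMap.smul_apply]
          rw [smul_comm]
        show θ (c.smulRight (k • v)) w₀ = k • θ (c.smulRight v) w₀
        rw [h, map_smul]; rfl } with hG
  have hGapp : ∀ v : A, G v = θ (c.smulRight v) w₀ := fun v => rfl
  have hGcomm : ∀ (z : Module.End K A) (v : A), G (z v) = θ z (G v) := by
    intro z v
    have h1 : c.smulRight (z v) = z ∘ₗ c.smulRight v := by
      ext x; simp
    rw [hGapp, hGapp, h1, hmul]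
    rfl
  have hG1 : G 1 = w₀ := by
    rw [hGapp]
    have : c.smulRight (1 : A) = p := rfl
    rw [this, ← hq, hqw₀]
  have hG0 : G 1 ≠ 0 := by rw [hG1]; exact hw₁
  -- G is bijective
  have hGker : LinearMap.ker G = ⊥ := by
    rcases hInv (LinearMap.ker G) (fun z w hw => by
      rw [LinearMap.mem_ker] at hw ⊢
      rw [hGcomm, hw, map_zero]) with h | h
    · exact h
    · exfalso
      exact hG0 (LinearMap.mem_ker.mp (h ▸ Submodule.mem_top))
  have hGrange : LinearMap.range G = ⊤ := by
    rcases hInv (LinearMap.range G) (fun z w hw => by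
      obtain ⟨v, rfl⟩ := hw
      obtain ⟨z', hz'⟩ := hθbij.surjective z
      rw [← hz', ← hGcomm]
      exact LinearMap.mem_range_self _ _) with h | h
    · exfalso
      apply hG0
      have : G 1 ∈ LinearMap.range G := LinearMap.mem_range_self _ _
      rw [h] at this
      simpa using this
    · exact h
  have hGinj : Function.Injective G := LinearMap.ker_eq_bot.mp hGker
  have hGsurj : Function.Surjective G := LinearMap.range_eq_top.mp hGrange
  -- θ fixes right multiplications
  have hRd : ∀ d : A, θ (LinearMap.mulRight K d) = LinearMap.mulRight K d := by
    intro d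
    have := hP 1 d
    simpa only [map_one, LinearMap.mulLeft_one, LinearMap.comp_id] using this
  -- G is left multiplication by u := G 1
  set u : A := G 1 with hu
  have hGmul : ∀ x : A, G x = u * x := by
    intro x
    have := hGcomm (LinearMap.mulRight K x) 1
    rw [hRd] at this
    simpa using this
  -- u is a unit
  obtain ⟨v, hv⟩ := hGsurj 1
  have huv : u * v = 1 := by rw [← hGmul, hv]
  have hvu : v * u = 1 := by
    apply hGinj
    rw [hGmul, ← mul_assoc, huv, one_mul, hu]
  -- conclusion
  refine ⟨⟨u, v, huv, hvu⟩, fun a => ?_⟩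
  have hLc := hP a 1
  rw [LinearMap.mulRight_one, LinearMap.id_comp, LinearMap.id_comp] at hLc
  have h3 := congrArg (fun z : Module.End K A => z (G 1)) hLc
  simp only [LinearMap.mulLeft_apply] at h3
  rw [← hGcomm (LinearMap.mulLeft K a) 1] at h3
  simp only [LinearMap.mulLeft_apply, mul_one] at h3
  rw [hGmul a, ← hu] at h3
  -- h3 : u * a = f a * u
  show f a = u * a * v
  calc f a = f a * (u * v) := by rw [huv, mul_one]
    _ = (f a * u) * v := by rw [mul_assoc]
    _ = (u * a) * v := by rw [← h3]
/-- Paper: core of the injectivity part of Lemma 7.4.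
Let `K` be a field, `R, R'` finite-dimensional central simple `K`-algebras and
`ψ : R ≃ₐ[K] R'` a `K`-algebra isomorphism.  If the ring automorphisms `η` of `R` and
`η'` of `R'` induce one and the same automorphism `σ` of `K`, then there is a unit
`u ∈ Rˣ` with `ψ (η (u * r * u⁻¹)) = η' (ψ r)` for all `r ∈ R`. -/
theorem clifford_stmt3 {K R R' : Type*} [Field K]
    [Ring R] [Algebra K R] [FiniteDimensional K R] [IsSimpleRing R]
    [Algebra.IsCentral K R]
    [Ring R'] [Algebra K R'] [FiniteDimensional K R'] [IsSimpleRing R']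
    [Algebra.IsCentral K R']
    (ψ : R ≃ₐ[K] R') (η : R ≃+* R) (η' : R' ≃+* R') (σ : K ≃+* K)
    (hη : ∀ x : K, η (algebraMap K R x) = algebraMap K R (σ x))
    (hη' : ∀ x : K, η' (algebraMap K R' x) = algebraMap K R' (σ x)) :
    ∃ u : Rˣ, ∀ r : R, ψ (η ((u : R) * r * ((u⁻¹ : Rˣ) : R))) = η' (ψ r) := by
  -- the composite ring automorphism of R
  set φ₀ : R ≃+* R :=
    ((ψ.toRingEquiv.trans η').trans ψ.symm.toRingEquiv).trans η.symm with hφ₀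
  have hφ₀app : ∀ r : R, φ₀ r = η.symm (ψ.symm (η' (ψ r))) := fun r => rfl
  -- it is K-linear
  have hcomm : ∀ x : K, φ₀ (algebraMap K R x) = algebraMap K R x := by
    intro x
    rw [hφ₀app, ψ.commutes, hη' x, ψ.symm.commutes]
    have := hη x
    calc η.symm (algebraMap K R (σ x)) = η.symm (η (algebraMap K R x)) := by rw [this]
      _ = algebraMap K R x := η.symm_apply_apply _
  set φ : R ≃ₐ[K] R := AlgEquiv.ofRingEquiv (f := φ₀) hcomm with hφ
  obtain ⟨u, hu⟩ := skolem_noether_auto φ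
  refine ⟨u, fun r => ?_⟩
  have h1 : (u : R) * r * ((u⁻¹ : Rˣ) : R) = η.symm (ψ.symm (η' (ψ r))) := by
    rw [← hu r]
    rfl
  rw [h1, RingEquiv.apply_symm_apply, AlgEquiv.apply_symm_apply]
end

section
/- Let A be a ring, G a group, R a subring of A, and u : G → Aˣ a family of units of A with u(e) = 1. Assume: (i) conjugation by each u(g) maps R onto R; (ii) u(g)·u(h) ∈ u(gh)·R for all g, h ∈ G; (iii) A is the internal direct sum of the additive subgroups u(g)·R, g ∈ G (every element of A is uniquely a finite sum Σ_g u(g)·r_g with r_g ∈ R); (iv) R is a simple ring; and (v) the induced action of G on the center Z(R) is faithful: for every g ≠ e there exists x ∈ Z(R) with u(g)·x ≠ x·u(g). Then A is a simple ring, and the center of A equals { x ∈ Z(R) : u(g)·x = x·u(g) for all g ∈ G }, the fixed subring of Z(R) under the G-action. -/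
/-- The homogeneous component `u·R` of a crossed product: the additive subgroup of all
elements of the form `u * r` with `r` in the subring `R`. -/
def unitMulAddSubgroup {A : Type*} [Ring A] (R : Subring A) (u : Aˣ) : AddSubgroup A where
  carrier := {a : A | ∃ r ∈ R, a = (u : A) * r}
  zero_mem' := ⟨0, R.zero_mem, by simp⟩
  add_mem' := by
    rintro a b ⟨r, hr, rfl⟩ ⟨s, hs, rfl⟩
    exact ⟨r + s, R.add_mem hr hs, by rw [mul_add]⟩
  neg_mem' := by
    rintro a ⟨r, hr, rfl⟩
    exact ⟨-r, R.neg_mem hr, by rw [mul_neg]⟩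

namespace Clifford4

variable {A : Type*} [Ring A] {G : Type*} [Group G] [DecidableEq G]
variable (R : Subring A) (u : G → Aˣ)

lemma mem_unitMul {v : Aˣ} {a : A} :
    a ∈ unitMulAddSubgroup R v ↔ ∃ r ∈ R, a = (v : A) * r := Iff.rfl

variable (hint : DirectSum.IsInternal (fun g : G => unitMulAddSubgroup R (u g)))

/-- The inverse of the canonical map, as an `AddEquiv`. -/
noncomputable def decomp : A ≃+ DirectSum G (fun g => unitMulAddSubgroup R (u g)) :=
  (AddEquiv.ofBijective (DirectSum.coeAddMonoidHom (fun g : G => unitMulAddSubgroup R (u g)))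
    hint).symm

/-- Projection onto the `g`-component, as an additive monoid hom `A →+ A`. -/
noncomputable def piA (g : G) : A →+ A :=
  ((unitMulAddSubgroup R (u g)).subtype).comp
    ((DFinsupp.evalAddMonoidHom g).comp (decomp R u hint).toAddMonoidHom)

lemma piA_apply (g : G) (a : A) : piA R u hint g a = ((decomp R u hint a) g : A) := rfl

lemma piA_mem (g : G) (a : A) : piA R u hint g a ∈ unitMulAddSubgroup R (u g) :=
  ((decomp R u hint a) g).2

lemma decomp_symm_apply (x) : (decomp R u hint).symm x =
    DirectSum.coeAddMonoidHom (fun g : G => unitMulAddSubgroup R (u g)) x := rfl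

lemma decomp_of (g : G) (x : unitMulAddSubgroup R (u g)) :
    decomp R u hint (x : A) = DirectSum.of (fun g => unitMulAddSubgroup R (u g)) g x := by
  have h := decomp_symm_apply R u hint
    (DirectSum.of (fun g => unitMulAddSubgroup R (u g)) g x)
  rw [DirectSum.coeAddMonoidHom_of] at h
  conv_lhs => rw [← h]
  exact (decomp R u hint).apply_symm_apply _

/-- Uniqueness of decompositions: projection of a sum of homogeneous elements. -/
lemma piA_sum (s : Finset G) (f : G → A)
    (hf : ∀ g ∈ s, f g ∈ unitMulAddSubgroup R (u g)) (g : G) :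
    piA R u hint g (∑ h ∈ s, f h) = if g ∈ s then f g else 0 := by
  classical
  set F : ∀ h : G, unitMulAddSubgroup R (u h) := fun h =>
    if hh : h ∈ s then ⟨f h, hf h hh⟩ else 0 with hF
  have hsum : decomp R u hint (∑ h ∈ s, f h) =
      ∑ h ∈ s, DirectSum.of (fun g => unitMulAddSubgroup R (u g)) h (F h) := by
    rw [map_sum]
    refine Finset.sum_congr rfl fun h hh => ?_
    have : f h = ((F h : unitMulAddSubgroup R (u h)) : A) := by
      simp [hF, hh]
    rw [show f h = ((F h) : A) from this, decomp_of]
  rw [piA_apply, hsum, DFinsupp.finset_sum_apply]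
  by_cases hg : g ∈ s
  · rw [if_pos hg, Finset.sum_eq_single_of_mem g hg]
    · rw [DirectSum.of_eq_same]; simp [hF, hg]
    · intro b _ hb; exact DirectSum.of_eq_of_ne _ _ _ hb.symm
  · rw [if_neg hg, Finset.sum_eq_zero, AddSubgroup.coe_zero]
    intro b hb; exact DirectSum.of_eq_of_ne _ _ _ (fun e => hg (e ▸ hb))

lemma piA_of_mem {g : G} {x : A} (hx : x ∈ unitMulAddSubgroup R (u g)) (k : G) :
    piA R u hint k x = if k = g then x else 0 := by
  have := piA_sum R u hint {g} (fun _ => x) (by simpa) k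
  simpa using this

/-- The support of `a`: the finite set of group elements where the component is nonzero. -/
noncomputable def supp (a : A) : Finset G := by
  classical exact (decomp R u hint a).support

lemma mem_supp_iff (a : A) (g : G) :
    g ∈ supp R u hint a ↔ piA R u hint g a ≠ 0 := by
  classical
  rw [supp, DFinsupp.mem_support_iff, piA_apply, ne_eq, ne_eq, ZeroMemClass.coe_eq_zero]

lemma sum_supp_piA (a : A) :
    ∑ g ∈ supp R u hint a, piA R u hint g a = a := by
  classical
  conv_rhs => rw [← (decomp R u hint).symm_apply_apply a,
    ← DirectSum.sum_support_of (decomp R u hint a)]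
  rw [map_sum, supp]
  refine Finset.sum_congr rfl fun g _ => ?_
  rw [decomp_symm_apply, DirectSum.coeAddMonoidHom_of, piA_apply]

section Arith

lemma conj_mem (hconj : ∀ g : G,
      (fun a : A => (u g : A) * a * ((u g)⁻¹ : Aˣ)) '' (R : Set A) = (R : Set A))
    (g : G) {r : A} (hr : r ∈ R) :
    (u g : A) * r * (((u g)⁻¹ : Aˣ) : A) ∈ R := by
  have : (u g : A) * r * (((u g)⁻¹ : Aˣ) : A) ∈
      (fun a : A => (u g : A) * a * ((u g)⁻¹ : Aˣ)) '' (R : Set A) := ⟨r, hr, rfl⟩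
  rwa [hconj g] at this

lemma conj_inv_mem (hconj : ∀ g : G,
      (fun a : A => (u g : A) * a * ((u g)⁻¹ : Aˣ)) '' (R : Set A) = (R : Set A))
    (g : G) {r : A} (hr : r ∈ R) :
    (((u g)⁻¹ : Aˣ) : A) * r * (u g : A) ∈ R := by
  have hr' : r ∈ (fun a : A => (u g : A) * a * ((u g)⁻¹ : Aˣ)) '' (R : Set A) := by
    rw [hconj g]; exact hr
  obtain ⟨s, hs, hsr⟩ := hr'
  have : (((u g)⁻¹ : Aˣ) : A) * r * (u g : A) = s := by
    rw [← hsr]; simp [mul_assoc]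
  rwa [this]

lemma unit_mem_comp (g : G) : (u g : A) ∈ unitMulAddSubgroup R (u g) :=
  ⟨1, R.one_mem, by simp⟩

lemma mul_mem_comp (hconj : ∀ g : G,
      (fun a : A => (u g : A) * a * ((u g)⁻¹ : Aˣ)) '' (R : Set A) = (R : Set A))
    (hcocycle : ∀ g h : G, ∃ r ∈ R, ((u g : A) * u h : A) = (u (g * h) : A) * r)
    {g h : G} {a b : A} (ha : a ∈ unitMulAddSubgroup R (u g))
    (hb : b ∈ unitMulAddSubgroup R (u h)) : a * b ∈ unitMulAddSubgroup R (u (g * h)) := by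
  obtain ⟨r, hr, rfl⟩ := ha
  obtain ⟨s, hs, rfl⟩ := hb
  obtain ⟨c, hc, hcc⟩ := hcocycle g h
  refine ⟨c * ((((u h)⁻¹ : Aˣ) : A) * r * (u h : A)) * s,
    R.mul_mem (R.mul_mem hc (conj_inv_mem R u hconj h hr)) hs, ?_⟩
  calc (u g : A) * r * ((u h : A) * s)
      = ((u g : A) * (u h : A)) * (((((u h)⁻¹ : Aˣ) : A) * r * (u h : A)) * s) := by
        simp [mul_assoc]
    _ = (u (g * h) : A) * (c * ((((u h)⁻¹ : Aˣ) : A) * r * (u h : A)) * s) := by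
        rw [hcc]; simp [mul_assoc]

lemma smul_mem_comp (hconj : ∀ g : G,
      (fun a : A => (u g : A) * a * ((u g)⁻¹ : Aˣ)) '' (R : Set A) = (R : Set A))
    {g : G} {r a : A} (hr : r ∈ R) (ha : a ∈ unitMulAddSubgroup R (u g)) :
    r * a ∈ unitMulAddSubgroup R (u g) := by
  obtain ⟨s, hs, rfl⟩ := ha
  exact ⟨(((u g)⁻¹ : Aˣ) : A) * r * (u g : A) * s,
    R.mul_mem (conj_inv_mem R u hconj g hr) hs, by simp [mul_assoc]⟩

lemma mul_mem_comp_right {g : G} {a r : A} (ha : a ∈ unitMulAddSubgroup R (u g)) (hr : r ∈ R) :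
    a * r ∈ unitMulAddSubgroup R (u g) := by
  obtain ⟨s, hs, rfl⟩ := ha
  exact ⟨s * r, R.mul_mem hs hr, by rw [mul_assoc]⟩

lemma piA_eq_zero_of_not_mem_supp {g : G} {a : A} (hg : g ∉ supp R u hint a) :
    piA R u hint g a = 0 := by
  by_contra h0; exact hg ((mem_supp_iff R u hint a g).2 h0)

lemma piA_smul (hconj : ∀ g : G,
      (fun a : A => (u g : A) * a * ((u g)⁻¹ : Aˣ)) '' (R : Set A) = (R : Set A))
    {r : A} (hr : r ∈ R) (g : G) (a : A) :
    piA R u hint g (r * a) = r * piA R u hint g a := by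
  conv_lhs => rw [← sum_supp_piA R u hint a, Finset.mul_sum]
  rw [piA_sum R u hint _ _ (fun h hh => smul_mem_comp R u hconj hr (piA_mem R u hint h a))]
  by_cases hg : g ∈ supp R u hint a
  · rw [if_pos hg]
  · rw [if_neg hg, piA_eq_zero_of_not_mem_supp R u hint hg, mul_zero]

lemma piA_mul_right {r : A} (hr : r ∈ R) (g : G) (a : A) :
    piA R u hint g (a * r) = piA R u hint g a * r := by
  conv_lhs => rw [← sum_supp_piA R u hint a, Finset.sum_mul]
  rw [piA_sum R u hint _ _ (fun h hh => mul_mem_comp_right R u (piA_mem R u hint h a) hr)]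
  by_cases hg : g ∈ supp R u hint a
  · rw [if_pos hg]
  · rw [if_neg hg, piA_eq_zero_of_not_mem_supp R u hint hg, zero_mul]

lemma piA_unit_mul (hconj : ∀ g : G,
      (fun a : A => (u g : A) * a * ((u g)⁻¹ : Aˣ)) '' (R : Set A) = (R : Set A))
    (hcocycle : ∀ g h : G, ∃ r ∈ R, ((u g : A) * u h : A) = (u (g * h) : A) * r)
    (k g : G) (a : A) :
    piA R u hint (k * g) ((u k : A) * a) = (u k : A) * piA R u hint g a := by
  have himg : ((u k : A) * a) = ∑ h ∈ (supp R u hint a).image (fun h => k * h),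
      (u k : A) * piA R u hint (k⁻¹ * h) a := by
    rw [Finset.sum_image (fun x _ y _ h => by
      simpa using mul_left_cancel h)]
    conv_lhs => rw [← sum_supp_piA R u hint a, Finset.mul_sum]
    exact Finset.sum_congr rfl fun h _ => by rw [inv_mul_cancel_left]
  rw [himg, piA_sum R u hint _ _ (fun h hh => by
    have h2 := mul_mem_comp R u hconj hcocycle (unit_mem_comp R u k)
      (piA_mem R u hint (k⁻¹ * h) a)
    rwa [mul_inv_cancel_left] at h2)]
  by_cases hg : g ∈ supp R u hint a
  · rw [if_pos (Finset.mem_image_of_mem _ hg), inv_mul_cancel_left]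
  · have h1 : k * g ∉ (supp R u hint a).image (fun h => k * h) := by
      intro hmem
      obtain ⟨h, hh, he⟩ := Finset.mem_image.1 hmem
      exact hg (by rwa [mul_left_cancel he] at hh)
    rw [if_neg h1, piA_eq_zero_of_not_mem_supp R u hint hg, mul_zero]

lemma supp_subset_of_sum {s : Finset G} {f : G → A}
    (hf : ∀ g ∈ s, f g ∈ unitMulAddSubgroup R (u g)) :
    supp R u hint (∑ h ∈ s, f h) ⊆ s := by
  intro g hg
  have := (mem_supp_iff R u hint _ g).1 hg
  rw [piA_sum R u hint s f hf g] at this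
  by_contra hgs
  exact this (if_neg hgs)

lemma mem_comp_one (hu1 : u 1 = 1) {x : A} :
    x ∈ unitMulAddSubgroup R (u 1) ↔ x ∈ R := by
  constructor
  · rintro ⟨r, hr, rfl⟩; rw [hu1]; simpa using hr
  · intro hx; exact ⟨x, hx, by rw [hu1]; simp⟩

/-- If a nonzero `r ∈ R` intertwines the conjugation action of `u g` with the identity,
then `u g` commutes with every central element of `R`. -/
lemma conj_fix_center (hconj : ∀ g : G,
      (fun a : A => (u g : A) * a * ((u g)⁻¹ : Aˣ)) '' (R : Set A) = (R : Set A))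
    (hsimple : IsSimpleRing R) (g : G) {r : A} (hrR : r ∈ R) (hr0 : r ≠ 0)
    (hrel : ∀ x ∈ R, (((u g)⁻¹ : Aˣ) : A) * x * (u g : A) * r = r * x) :
    ∀ z ∈ R, (∀ s ∈ R, z * s = s * z) → (u g : A) * z = z * (u g : A) := by
  haveI hso := hsimple.simple
  -- `r` has a right inverse in `R`
  obtain ⟨y, hyR, hy1⟩ : ∃ y ∈ R, (1 : A) = r * y := by
    let K := TwoSidedIdeal.mk' {t : R | ∃ s ∈ R, (t : A) = r * s}
      ⟨0, R.zero_mem, by simp⟩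
      (by rintro x y ⟨s, hs, hx⟩ ⟨s', hs', hy⟩
          exact ⟨s + s', R.add_mem hs hs', by push_cast; rw [hx, hy, mul_add]⟩)
      (by rintro x ⟨s, hs, hx⟩
          exact ⟨-s, R.neg_mem hs, by push_cast; rw [hx, mul_neg]⟩)
      (by rintro x y ⟨s, hs, hy⟩
          have hx' : (u g : A) * (x : A) * (((u g)⁻¹ : Aˣ) : A) ∈ R :=
            conj_mem R u hconj g x.2
          have hx2 : (((u g)⁻¹ : Aˣ) : A) * ((u g : A) * (x : A) * (((u g)⁻¹ : Aˣ) : A))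
              * (u g : A) = (x : A) := by simp [mul_assoc]
          have hxr : (x : A) * r = r * ((u g : A) * (x : A) * (((u g)⁻¹ : Aˣ) : A)) := by
            have h := hrel _ hx'
            rwa [hx2] at h
          refine ⟨(u g : A) * (x : A) * (((u g)⁻¹ : Aˣ) : A) * s,
            R.mul_mem hx' hs, ?_⟩
          push_cast
          rw [hy, ← mul_assoc, hxr, mul_assoc])
      (by rintro x y ⟨s, hs, hx⟩
          exact ⟨s * (y : A), R.mul_mem hs y.2, by push_cast; rw [hx, mul_assoc]⟩)
    have hmem : ∀ t : R, t ∈ K ↔ ∃ s ∈ R, (t : A) = r * s := fun t =>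
      TwoSidedIdeal.mem_mk' _ _ _ _ _ _ t
    have hK : K = ⊤ := by
      rcases hso.eq_bot_or_eq_top K with hK | hK
      · exfalso
        have : (⟨r, hrR⟩ : R) ∈ K := (hmem _).2 ⟨1, R.one_mem, by simp⟩
        rw [hK, TwoSidedIdeal.mem_bot] at this
        exact hr0 (by simpa using congrArg (Subtype.val) this)
      · exact hK
    obtain ⟨s, hs, h1⟩ := (hmem 1).1 (hK ▸ TwoSidedIdeal.mem_top _)
    exact ⟨s, hs, by simpa using h1⟩
  -- `r` has a left inverse in `R`
  obtain ⟨z, hzR, hz1⟩ : ∃ z ∈ R, (1 : A) = z * r := by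
    let K := TwoSidedIdeal.mk' {t : R | ∃ s ∈ R, (t : A) = s * r}
      ⟨0, R.zero_mem, by simp⟩
      (by rintro x y ⟨s, hs, hx⟩ ⟨s', hs', hy⟩
          exact ⟨s + s', R.add_mem hs hs', by push_cast; rw [hx, hy, add_mul]⟩)
      (by rintro x ⟨s, hs, hx⟩
          exact ⟨-s, R.neg_mem hs, by push_cast; rw [hx, neg_mul]⟩)
      (by rintro x y ⟨s, hs, hy⟩
          exact ⟨(x : A) * s, R.mul_mem x.2 hs, by push_cast; rw [hy, mul_assoc]⟩)
      (by rintro x y ⟨s, hs, hx⟩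
          have hty : (((u g)⁻¹ : Aˣ) : A) * (y : A) * (u g : A) ∈ R :=
            conj_inv_mem R u hconj g y.2
          have hry : r * (y : A) = ((((u g)⁻¹ : Aˣ) : A) * (y : A) * (u g : A)) * r :=
            (hrel _ y.2).symm
          refine ⟨s * ((((u g)⁻¹ : Aˣ) : A) * (y : A) * (u g : A)), R.mul_mem hs hty, ?_⟩
          push_cast
          rw [hx, mul_assoc, hry, ← mul_assoc, ← mul_assoc])
    have hmem : ∀ t : R, t ∈ K ↔ ∃ s ∈ R, (t : A) = s * r := fun t =>
      TwoSidedIdeal.mem_mk' _ _ _ _ _ _ t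
    have hK : K = ⊤ := by
      rcases hso.eq_bot_or_eq_top K with hK | hK
      · exfalso
        have : (⟨r, hrR⟩ : R) ∈ K := (hmem _).2 ⟨1, R.one_mem, by simp⟩
        rw [hK, TwoSidedIdeal.mem_bot] at this
        exact hr0 (by simpa using congrArg (Subtype.val) this)
      · exact hK
    obtain ⟨s, hs, h1⟩ := (hmem 1).1 (hK ▸ TwoSidedIdeal.mem_top _)
    exact ⟨s, hs, by simpa using h1⟩
  -- hence `r` is invertible with inverse `y = z`
  have hzy : z = y := by
    calc z = z * (r * y) := by rw [← hy1, mul_one]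
    _ = (z * r) * y := by rw [mul_assoc]
    _ = y := by rw [← hz1, one_mul]
  have hyr : y * r = 1 := by rw [← hzy, ← hz1]
  -- conclude
  intro w hwR hwc
  have h1 : (((u g)⁻¹ : Aˣ) : A) * w * (u g : A) * r = r * w := hrel w hwR
  have h2 : (((u g)⁻¹ : Aˣ) : A) * w * (u g : A) = w := by
    have := congrArg (· * y) h1
    simp only [mul_assoc] at this
    rw [← hy1] at this
    -- this : u g⁻¹ * (w * (u g * 1)) = r * (w * y)
    rw [mul_one] at this
    calc (((u g)⁻¹ : Aˣ) : A) * w * (u g : A) = r * (w * y) := by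
          rw [mul_assoc]; exact this
    _ = r * (y * w) := by rw [hwc y hyR]
    _ = (r * y) * w := by rw [mul_assoc]
    _ = w := by rw [← hy1, one_mul]
  conv_lhs => rw [← h2]
  simp [mul_assoc]

lemma supp_unit_mul_subset (hconj : ∀ g : G,
      (fun a : A => (u g : A) * a * ((u g)⁻¹ : Aˣ)) '' (R : Set A) = (R : Set A))
    (hcocycle : ∀ g h : G, ∃ r ∈ R, ((u g : A) * u h : A) = (u (g * h) : A) * r)
    (k : G) (a : A) :
    supp R u hint ((u k : A) * a) ⊆ (supp R u hint a).image (fun h => k * h) := by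
  intro g hg
  have hval := (mem_supp_iff R u hint _ g).1 hg
  by_contra hgi
  have heq := piA_unit_mul R u hint hconj hcocycle k (k⁻¹ * g) a
  rw [mul_inv_cancel_left] at heq
  apply hval
  rw [heq]
  have hnm : k⁻¹ * g ∉ supp R u hint a := fun hmem =>
    hgi (Finset.mem_image.2 ⟨_, hmem, by rw [mul_inv_cancel_left]⟩)
  rw [piA_eq_zero_of_not_mem_supp R u hint hnm, mul_zero]

end Arith

end Clifford4

/-- Paper: Lemma 7.6(1).
Let `A` be a crossed product `R∗G`: `R` a subring, `u : G → Aˣ` with `u 1 = 1`,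
conjugation by each `u g` mapping `R` onto `R`, `u g * u h ∈ u (g*h) · R`, and `A` the
internal direct sum of the additive subgroups `u g · R`.  If `R` is a simple ring and
the induced `G`-action on the center of `R` is faithful, then `A` is a simple ring and
the center of `A` is the fixed subring of the center of `R` under the `G`-action. -/
theorem clifford_stmt4 {A : Type*} [Ring A] {G : Type*} [Group G] [DecidableEq G]
    (R : Subring A) (u : G → Aˣ) (hu1 : u 1 = 1)
    (hconj : ∀ g : G,
      (fun a : A => (u g : A) * a * ((u g)⁻¹ : Aˣ)) '' (R : Set A) = (R : Set A))
    (hcocycle : ∀ g h : G, ∃ r ∈ R, ((u g : A) * u h : A) = (u (g * h) : A) * r)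
    (hinternal : DirectSum.IsInternal (fun g : G => unitMulAddSubgroup R (u g)))
    (hsimple : IsSimpleRing R)
    (hfaithful : ∀ g : G, g ≠ 1 → ∃ x : A, x ∈ R ∧ (∀ r ∈ R, x * r = r * x) ∧
      (u g : A) * x ≠ x * u g) :
    IsSimpleRing A ∧
      (Subring.center A : Set A) =
        {x : A | x ∈ R ∧ (∀ r ∈ R, x * r = r * x) ∧ ∀ g : G, (u g : A) * x = x * u g} := by
  classical
  -- (F1) `1 ≠ 0` in `A`
  have hA10 : (1 : A) ≠ 0 := by
    intro h10
    haveI := hsimple.simple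
    apply bot_ne_top (α := TwoSidedIdeal ↥R)
    refine eq_top_iff.2 fun x _ => ?_
    have hx : (x : A) = 0 := by
      have h := (mul_one (x : A)).symm
      rw [h10, mul_zero] at h
      exact h
    exact (TwoSidedIdeal.mem_bot ↥R).2 (Subtype.ext hx)
  -- (F2) a nonzero homogeneous component of degree `g ≠ 1` cannot centralize `R`
  have hKill : ∀ g : G, g ≠ 1 → ∀ c : A, c ∈ unitMulAddSubgroup R (u g) →
      (∀ x ∈ R, x * c = c * x) → c = 0 := by
    intro g hg c hc hcomm
    obtain ⟨r, hrR, rfl⟩ := hc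
    by_contra hc0
    have hr0 : r ≠ 0 := fun h => hc0 (by rw [h, mul_zero])
    have hrel : ∀ x ∈ R, (((u g)⁻¹ : Aˣ) : A) * x * (u g : A) * r = r * x := by
      intro x hx
      have h := hcomm x hx
      calc (((u g)⁻¹ : Aˣ) : A) * x * (u g : A) * r
          = (((u g)⁻¹ : Aˣ) : A) * (x * ((u g : A) * r)) := by simp [mul_assoc]
        _ = (((u g)⁻¹ : Aˣ) : A) * ((u g : A) * r * x) := by rw [h]
        _ = r * x := by simp [mul_assoc]
    obtain ⟨z, hzR, hzc, hzne⟩ := hfaithful g hg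
    exact hzne (Clifford4.conj_fix_center R u hconj hsimple g hrR hr0 hrel z hzR hzc)
  constructor
  · -- simplicity of A
    haveI : Nontrivial (TwoSidedIdeal A) := by
      refine ⟨⊥, ⊤, fun h => hA10 ?_⟩
      have h1 : (1 : A) ∈ (⊥ : TwoSidedIdeal A) := h ▸ TwoSidedIdeal.mem_top A
      exact (TwoSidedIdeal.mem_bot A).1 h1
    refine ⟨⟨fun I => ?_⟩⟩
    by_cases hI : I = ⊥
    · exact Or.inl hI
    refine Or.inr ?_
    -- find a nonzero element of I
    obtain ⟨a0, ha0I, ha00⟩ : ∃ a, a ∈ I ∧ a ≠ 0 := by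
      by_contra h
      push_neg at h
      exact hI (eq_bot_iff.2 fun x hx => (TwoSidedIdeal.mem_bot A).2 (h x hx))
    -- minimal support cardinality
    set S : Set ℕ := {n : ℕ | ∃ a, a ∈ I ∧ a ≠ 0 ∧ (Clifford4.supp R u hinternal a).card = n}
      with hS
    have hSne : S.Nonempty := ⟨_, a0, ha0I, ha00, rfl⟩
    obtain ⟨a1, ha1I, ha10, ha1card⟩ := Nat.sInf_mem hSne
    have hmin : ∀ b : A, b ∈ I → b ≠ 0 → sInf S ≤ (Clifford4.supp R u hinternal b).card :=
      fun b hb hb0 => Nat.sInf_le ⟨b, hb, hb0, rfl⟩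
    -- translate so that `1` lies in the support
    have hsne : (Clifford4.supp R u hinternal a1).Nonempty := by
      rw [Finset.nonempty_iff_ne_empty]
      intro he
      apply ha10
      rw [← Clifford4.sum_supp_piA R u hinternal a1, he, Finset.sum_empty]
    obtain ⟨g0, hg0⟩ := hsne
    set a2 : A := ((u g0⁻¹ : Aˣ) : A) * a1 with ha2
    have ha2I : a2 ∈ I := I.mul_mem_left _ _ ha1I
    have ha2pi1 : Clifford4.piA R u hinternal 1 a2
        = ((u g0⁻¹ : Aˣ) : A) * Clifford4.piA R u hinternal g0 a1 := by
      have h := Clifford4.piA_unit_mul R u hinternal hconj hcocycle g0⁻¹ g0 a1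
      rwa [inv_mul_cancel] at h
    have hpi1ne : Clifford4.piA R u hinternal 1 a2 ≠ 0 := by
      rw [ha2pi1]
      intro h
      exact (Clifford4.mem_supp_iff R u hinternal a1 g0).1 hg0
        ((Units.mul_right_eq_zero _).1 h)
    have ha2card : (Clifford4.supp R u hinternal a2).card ≤ sInf S := by
      calc (Clifford4.supp R u hinternal a2).card
          ≤ ((Clifford4.supp R u hinternal a1).image (fun h => g0⁻¹ * h)).card :=
            Finset.card_le_card
              (Clifford4.supp_unit_mul_subset R u hinternal hconj hcocycle g0⁻¹ a1)
        _ ≤ (Clifford4.supp R u hinternal a1).card := Finset.card_image_le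
        _ = sInf S := ha1card
    -- normalize: find b ∈ I with piA 1 b = 1 and support inside supp a2
    obtain ⟨b, hbI, hbsupp, hbpi1⟩ : ∃ b : A, b ∈ I ∧
        Clifford4.supp R u hinternal b ⊆ Clifford4.supp R u hinternal a2 ∧
        Clifford4.piA R u hinternal 1 b = 1 := by
      haveI := hsimple.simple
      have hsuppz : ∀ b : A, (∀ g : G, Clifford4.piA R u hinternal g b = 0) →
          Clifford4.supp R u hinternal b ⊆ Clifford4.supp R u hinternal a2 := by
        intro b hb g hg
        exact absurd (hb g) ((Clifford4.mem_supp_iff R u hinternal b g).1 hg)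
      let J := TwoSidedIdeal.mk'
        {t : ↥R | ∃ b : A, b ∈ I ∧
          Clifford4.supp R u hinternal b ⊆ Clifford4.supp R u hinternal a2 ∧
          Clifford4.piA R u hinternal 1 b = (t : A)}
        ⟨0, I.zero_mem, hsuppz 0 (fun g => map_zero _), by rw [map_zero]; simp⟩
        (by rintro x y ⟨b, hb, hbs, hbp⟩ ⟨b', hb', hbs', hbp'⟩
            refine ⟨b + b', I.add_mem hb hb', ?_, by rw [map_add, hbp, hbp']; push_cast; ring⟩
            intro g hg
            have hgv := (Clifford4.mem_supp_iff R u hinternal _ g).1 hg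
            rw [map_add] at hgv
            by_cases h1 : Clifford4.piA R u hinternal g b = 0
            · have h2 : Clifford4.piA R u hinternal g b' ≠ 0 := by
                intro h2; exact hgv (by rw [h1, h2, add_zero])
              exact hbs' ((Clifford4.mem_supp_iff R u hinternal b' g).2 h2)
            · exact hbs ((Clifford4.mem_supp_iff R u hinternal b g).2 h1))
        (by rintro x ⟨b, hb, hbs, hbp⟩
            refine ⟨-b, I.neg_mem hb, ?_, by rw [map_neg, hbp]; push_cast; ring⟩
            intro g hg
            have hgv := (Clifford4.mem_supp_iff R u hinternal _ g).1 hg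
            rw [map_neg, ne_eq, neg_eq_zero] at hgv
            exact hbs ((Clifford4.mem_supp_iff R u hinternal b g).2 hgv))
        (by rintro x y ⟨b, hb, hbs, hbp⟩
            refine ⟨(x : A) * b, I.mul_mem_left _ _ hb, ?_, ?_⟩
            · intro g hg
              have hgv := (Clifford4.mem_supp_iff R u hinternal _ g).1 hg
              rw [Clifford4.piA_smul R u hinternal hconj x.2] at hgv
              have h2 : Clifford4.piA R u hinternal g b ≠ 0 := by
                intro h2; exact hgv (by rw [h2, mul_zero])
              exact hbs ((Clifford4.mem_supp_iff R u hinternal b g).2 h2)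
            · rw [Clifford4.piA_smul R u hinternal hconj x.2, hbp]; push_cast; ring)
        (by rintro x y ⟨b, hb, hbs, hbp⟩
            refine ⟨b * (y : A), I.mul_mem_right _ _ hb, ?_, ?_⟩
            · intro g hg
              have hgv := (Clifford4.mem_supp_iff R u hinternal _ g).1 hg
              rw [Clifford4.piA_mul_right R u hinternal y.2] at hgv
              have h2 : Clifford4.piA R u hinternal g b ≠ 0 := by
                intro h2; exact hgv (by rw [h2, zero_mul])
              exact hbs ((Clifford4.mem_supp_iff R u hinternal b g).2 h2)
            · rw [Clifford4.piA_mul_right R u hinternal y.2, hbp]; push_cast; ring)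
      have hJmem : ∀ t : ↥R, t ∈ J ↔ ∃ b : A, b ∈ I ∧
          Clifford4.supp R u hinternal b ⊆ Clifford4.supp R u hinternal a2 ∧
          Clifford4.piA R u hinternal 1 b = (t : A) := fun t =>
        TwoSidedIdeal.mem_mk' _ _ _ _ _ _ t
      have hpi1R : Clifford4.piA R u hinternal 1 a2 ∈ R :=
        (Clifford4.mem_comp_one R u hu1).1 (Clifford4.piA_mem R u hinternal 1 a2)
      have hJtop : J = ⊤ := by
        rcases (hsimple.simple).eq_bot_or_eq_top J with hJ | hJ
        · exfalso
          have hm : (⟨_, hpi1R⟩ : ↥R) ∈ J := (hJmem _).2 ⟨a2, ha2I, Finset.Subset.refl _, rfl⟩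
          rw [hJ, TwoSidedIdeal.mem_bot] at hm
          exact hpi1ne (by simpa using congrArg Subtype.val hm)
        · exact hJ
      obtain ⟨b, hb, hbs, hbp⟩ := (hJmem 1).1 (hJtop ▸ TwoSidedIdeal.mem_top _)
      exact ⟨b, hb, hbs, by simpa using hbp⟩
    have hb0 : b ≠ 0 := by
      intro h
      apply hA10
      rw [← hbpi1, h, map_zero]
    have h1supp : (1 : G) ∈ Clifford4.supp R u hinternal b :=
      (Clifford4.mem_supp_iff R u hinternal b 1).2 (by rw [hbpi1]; exact hA10)
    have hbcardle : (Clifford4.supp R u hinternal b).card ≤ sInf S :=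
      le_trans (Finset.card_le_card hbsupp) ha2card
    -- b commutes with R
    have hcomm : ∀ x ∈ R, x * b = b * x := by
      intro x hx
      by_contra hne
      have hcI : x * b - b * x ∈ I :=
        I.sub_mem (I.mul_mem_left _ _ hbI) (I.mul_mem_right _ _ hbI)
      have hc0 : x * b - b * x ≠ 0 := sub_ne_zero.2 hne
      have hsupp : Clifford4.supp R u hinternal (x * b - b * x)
          ⊆ (Clifford4.supp R u hinternal b).erase 1 := by
        intro g hg
        have hgval := (Clifford4.mem_supp_iff R u hinternal _ g).1 hg
        rw [map_sub, Clifford4.piA_smul R u hinternal hconj hx,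
          Clifford4.piA_mul_right R u hinternal hx] at hgval
        rw [Finset.mem_erase]
        constructor
        · intro h1
          apply hgval
          rw [h1, hbpi1, mul_one, one_mul, sub_self]
        · by_contra hgb
          apply hgval
          rw [Clifford4.piA_eq_zero_of_not_mem_supp R u hinternal hgb, mul_zero, zero_mul,
            sub_self]
      have := hmin _ hcI hc0
      have hlt : (Clifford4.supp R u hinternal (x * b - b * x)).card
          < (Clifford4.supp R u hinternal b).card :=
        lt_of_le_of_lt (Finset.card_le_card hsupp) (Finset.card_erase_lt_of_mem h1supp)
      omega
    -- support of b is {1}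
    have hsuppb1 : Clifford4.supp R u hinternal b ⊆ {1} := by
      intro g hg
      rw [Finset.mem_singleton]
      by_contra hg1
      refine (Clifford4.mem_supp_iff R u hinternal b g).1 hg ?_
      refine hKill g hg1 _ (Clifford4.piA_mem R u hinternal g b) ?_
      intro x hx
      have h := congrArg (Clifford4.piA R u hinternal g) (hcomm x hx)
      rwa [Clifford4.piA_smul R u hinternal hconj hx,
        Clifford4.piA_mul_right R u hinternal hx] at h
    have hb1 : b = 1 := by
      conv_lhs => rw [← Clifford4.sum_supp_piA R u hinternal b]
      rw [Finset.sum_subset hsuppb1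
        (fun g _ hgs => Clifford4.piA_eq_zero_of_not_mem_supp R u hinternal hgs),
        Finset.sum_singleton, hbpi1]
    have h1I : (1 : A) ∈ I := hb1 ▸ hbI
    exact eq_top_iff.2 fun x _ => by simpa using I.mul_mem_left x 1 h1I
  · -- the center
    ext x
    simp only [SetLike.mem_coe, Subring.mem_center_iff, Set.mem_setOf_eq]
    constructor
    · intro hx
      have hxcomp : ∀ g : G, g ≠ 1 → Clifford4.piA R u hinternal g x = 0 := by
        intro g hg
        refine hKill g hg _ (Clifford4.piA_mem R u hinternal g x) ?_
        intro s hs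
        have h := congrArg (Clifford4.piA R u hinternal g) (hx s)
        rwa [Clifford4.piA_smul R u hinternal hconj hs,
          Clifford4.piA_mul_right R u hinternal hs] at h
      have hsub : Clifford4.supp R u hinternal x ⊆ {1} := by
        intro g hg
        rw [Finset.mem_singleton]
        by_contra hg1
        exact (Clifford4.mem_supp_iff R u hinternal x g).1 hg (hxcomp g hg1)
      have hx1 : x = Clifford4.piA R u hinternal 1 x := by
        conv_lhs => rw [← Clifford4.sum_supp_piA R u hinternal x]
        rw [Finset.sum_subset hsub
          (fun g _ hgs => Clifford4.piA_eq_zero_of_not_mem_supp R u hinternal hgs),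
          Finset.sum_singleton]
      refine ⟨?_, fun r _ => (hx r).symm, fun g => hx (u g)⟩
      rw [hx1]
      exact (Clifford4.mem_comp_one R u hu1).1 (Clifford4.piA_mem R u hinternal 1 x)
    · rintro ⟨hxR, hxc, hxu⟩ a
      have hcomp : ∀ g : G, Clifford4.piA R u hinternal g a * x
          = x * Clifford4.piA R u hinternal g a := by
        intro g
        obtain ⟨r, hr, he⟩ := Clifford4.piA_mem R u hinternal g a
        rw [he]
        calc (u g : A) * r * x = (u g : A) * (x * r) := by rw [mul_assoc, hxc r hr]
          _ = x * ((u g : A) * r) := by rw [← mul_assoc, hxu g, mul_assoc]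
      calc a * x = (∑ g ∈ Clifford4.supp R u hinternal a,
            Clifford4.piA R u hinternal g a) * x := by
            rw [Clifford4.sum_supp_piA R u hinternal a]
        _ = ∑ g ∈ Clifford4.supp R u hinternal a,
            Clifford4.piA R u hinternal g a * x := Finset.sum_mul _ _ _
        _ = ∑ g ∈ Clifford4.supp R u hinternal a,
            x * Clifford4.piA R u hinternal g a :=
            Finset.sum_congr rfl fun g _ => hcomp g
        _ = x * a := by rw [← Finset.mul_sum, Clifford4.sum_supp_piA R u hinternal a]
end

section
/- Let K be a field, G a finite group, and let A be a crossed product R∗G: A is a ring with subring R and units u : G → Aˣ having u(e) = 1, conjugation by each u(g) maps R onto R, u(g)·u(h) ∈ u(gh)·R, and A is the internal direct sum of the additive subgroups u(g)·R. Assume R is a finite-dimensional central simple K-algebra and that the induced G-action on K = Z(R) is faithful, with fixed field k := K^G (which lies in the center of A). Regard A as a right R-module via ring multiplication. Then the assignment sending a ⊗ x (a ∈ A, x ∈ K) to the right-R-module endomorphism y ↦ a·y·x of A induces a ring isomorphism A ⊗_k K ≅ End_R(A). -/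
open TensorProduct

/-- The homogeneous component `u·R`: the additive subgroup of all elements `u * j r`,
`r ∈ R`, where `j : R →+* A` is the inclusion of the base ring. -/
def unitMulBaseAddSubgroup {R A : Type*} [Ring R] [Ring A] (j : R →+* A) (u : Aˣ) :
    AddSubgroup A where
  carrier := {a : A | ∃ r : R, a = (u : A) * j r}
  zero_mem' := ⟨0, by simp⟩
  add_mem' := by
    rintro a b ⟨r, rfl⟩ ⟨s, rfl⟩
    exact ⟨r + s, by rw [map_add, mul_add]⟩
  neg_mem' := by
    rintro a ⟨r, rfl⟩
    exact ⟨-r, by rw [map_neg, mul_neg]⟩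

/-- The endomorphism ring `End_R A` of `A` as a right module over (the image of) `R`,
realized as the subring of `AddMonoid.End A` of additive endomorphisms commuting with
right multiplication by elements of the set `S` (here `S = Set.range j`). -/
def rightEndSubring (A : Type*) [Ring A] (S : Set A) : Subring (AddMonoid.End A) where
  carrier := {φ : AddMonoid.End A | ∀ (y : A), ∀ s ∈ S, φ (y * s) = φ y * s}
  one_mem' := fun y s _ => rfl
  mul_mem' := by
    intro φ ψ hφ hψ y s hs
    show φ (ψ (y * s)) = φ (ψ y) * s
    rw [hψ y s hs, hφ _ s hs]
  add_mem' := by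
    intro φ ψ hφ hψ y s hs
    show φ (y * s) + ψ (y * s) = (φ y + ψ y) * s
    rw [hφ y s hs, hψ y s hs, add_mul]
  zero_mem' := fun y s _ => by
    show (0 : A) = 0 * s
    rw [zero_mul]
  neg_mem' := by
    intro φ hφ y s hs
    show -(φ (y * s)) = -(φ y) * s
    rw [hφ y s hs, neg_mul]

open Module Matrix


theorem crossed_key {k K : Type*} [Field k] [Field K] [Algebra k K]
    {G : Type*} [Group G] [Fintype G] [DecidableEq G]
    (σ : G →* (K ≃ₐ[k] K)) (hσ : Function.Injective σ)
    (hfix : ∀ x : K, (∀ g : G, σ g x = x) → ∃ c : k, x = algebraMap k K c) :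
    ∃ (b : G → K) (N : Matrix G G K),
      (∀ y : K, ∃ c : G → k, y = ∑ i, algebraMap k K (c i) * b i) ∧
      (∀ i i' : G, (∑ g, σ g (b i) * N g i') = if i = i' then 1 else 0) ∧
      (∀ g g' : G, (∑ i, N g i * σ g' (b i)) = if g = g' then 1 else 0) := by
  letI : MulSemiringAction G K :=
    { smul := fun g x => σ g x
      one_smul := fun x => by show σ 1 x = x; simp
      mul_smul := fun g h x => by show σ (g * h) x = σ g (σ h x); simp [_root_.map_mul]
      smul_zero := fun g => map_zero (σ g)
      smul_add := fun g => map_add (σ g)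
      smul_one := fun g => map_one (σ g)
      smul_mul := fun g => map_mul (σ g) }
  have smul_def : ∀ (g : G) (x : K), g • x = σ g x := fun _ _ => rfl
  haveI : FaithfulSMul G K :=
    ⟨fun {g g'} h => hσ (AlgEquiv.ext fun x => (smul_def g x).symm.trans
      ((h x).trans (smul_def g' x)))⟩
  set F := FixedPoints.subfield G K with hF
  have hfinrank : finrank F K = Fintype.card G := FixedPoints.finrank_eq_card G K
  -- basis of K over F indexed by G
  let b0 : Basis (Fin (finrank F K)) F K := Module.finBasis F K
  let bF : Basis G F K := b0.reindex (Fintype.equivOfCardEq (by simp [hfinrank]))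
  -- ring iso k ≃+* F
  have hmemF : ∀ c : k, algebraMap k K c ∈ F := fun c g => (σ g).commutes c
  let e : k →+* F :=
    { toFun := fun c => ⟨algebraMap k K c, hmemF c⟩
      map_one' := Subtype.ext (map_one _)
      map_mul' := fun a b => Subtype.ext (map_mul _ a b)
      map_zero' := Subtype.ext (map_zero _)
      map_add' := fun a b => Subtype.ext (map_add _ a b) }
  have he : Function.Bijective e := by
    constructor
    · intro a b h
      have : algebraMap k K a = algebraMap k K b := congrArg Subtype.val h
      exact (algebraMap k K).injective this
    · rintro ⟨y, hy⟩
      obtain ⟨c, hc⟩ := hfix y hy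
      exact ⟨c, Subtype.ext hc.symm⟩
  let eE : k ≃+* F := RingEquiv.ofBijective e he
  have hcoe : ∀ c : k, algebraMap k K c = (eE c : K) := fun c => rfl
  let bk : Basis G k K := bF.mapCoeffs eE.symm (by
    intro c x
    rw [Algebra.smul_def, hcoe, eE.apply_symm_apply]
    rfl)
  refine ⟨bk, ?_⟩
  -- the matrix
  let W : Matrix G G K := Matrix.of fun g i => σ g (bk i)
  have hW : IsUnit W := by
    rw [← Matrix.linearIndependent_rows_iff_isUnit]
    rw [Fintype.linearIndependent_iff]
    intro c hc g₀
    -- turn into statement about monoid homs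
    let f : G → (K →* K) := fun g => ((σ g : K ≃+* K) : K →+* K).toMonoidHom
    have hfinj : Function.Injective f := by
      intro g g' h
      exact hσ (AlgEquiv.ext fun x => DFunLike.congr_fun h x)
    have hli : LinearIndependent K (fun g => ⇑(f g)) :=
      (linearIndependent_monoidHom K K).comp f hfinj
    rw [Fintype.linearIndependent_iff] at hli
    refine hli c ?_ g₀
    funext y
    have hy : y = ∑ i, bk.repr y i • bk i := (bk.sum_repr y).symm
    have hσy : ∀ g : G, σ g y = ∑ i, bk.repr y i • σ g (bk i) := by
      intro g
      conv_lhs => rw [hy]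
      rw [map_sum]
      exact Finset.sum_congr rfl fun i _ => map_smul (σ g) _ _
    have hWrow : ∀ i : G, (∑ g, c g * σ g (bk i)) = 0 := by
      intro i
      have := congrFun hc i
      simpa [W, Finset.sum_apply] using this
    calc (∑ g, c g • ⇑(f g)) y = ∑ g, c g * σ g y := by
          simp [Finset.sum_apply, f]
      _ = ∑ g, ∑ i, c g * (bk.repr y i • σ g (bk i)) := by
          refine Finset.sum_congr rfl fun g _ => ?_
          rw [hσy g, Finset.mul_sum]
      _ = ∑ i, bk.repr y i • (∑ g, c g * σ g (bk i)) := by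
          rw [Finset.sum_comm]
          refine Finset.sum_congr rfl fun i _ => ?_
          rw [Finset.smul_sum]
          refine Finset.sum_congr rfl fun g _ => ?_
          exact mul_smul_comm _ _ _
      _ = 0 := by simp [hWrow]
  have hWT : IsUnit Wᵀ := (Matrix.isUnit_transpose W).mpr hW
  have hdet : IsUnit Wᵀ.det := (Matrix.isUnit_iff_isUnit_det _).mp hWT
  refine ⟨(Wᵀ)⁻¹, ?_, ?_, ?_⟩
  · intro y
    refine ⟨fun i => bk.repr y i, ?_⟩
    conv_lhs => rw [← bk.sum_repr y]
    exact Finset.sum_congr rfl fun i _ => (Algebra.smul_def _ _)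
  · intro i i'
    have := Matrix.mul_nonsing_inv Wᵀ hdet
    have h2 := congrFun (congrFun this i) i'
    rw [Matrix.mul_apply] at h2
    simpa [Matrix.one_apply, W] using h2
  · intro g g'
    have := Matrix.nonsing_inv_mul Wᵀ hdet
    have h2 := congrFun (congrFun this g) g'
    rw [Matrix.mul_apply] at h2
    simpa [Matrix.one_apply, W] using h2


lemma conj_mul' {A : Type*} [Ring A] (w : Aˣ) (a b : A) :
    ((w : A) * a * ((w⁻¹ : Aˣ) : A)) * ((w : A) * b * ((w⁻¹ : Aˣ) : A)) =
      (w : A) * (a * b) * ((w⁻¹ : Aˣ) : A) := by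
  have h : ((w⁻¹ : Aˣ) : A) * ((w : A) * b * ((w⁻¹ : Aˣ) : A)) = b * ((w⁻¹ : Aˣ) : A) := by
    rw [← mul_assoc, ← mul_assoc, Units.inv_mul, one_mul]
  rw [mul_assoc ((w : A) * a), h, ← mul_assoc, mul_assoc (w : A)]

lemma conj_conj {A : Type*} [Ring A] (w v : Aˣ) (a : A) :
    (w : A) * ((v : A) * a * ((v⁻¹ : Aˣ) : A)) * ((w⁻¹ : Aˣ) : A) =
      (((w * v : Aˣ) : A)) * a * ((((w * v)⁻¹ : Aˣ) : A)) := by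
  rw [_root_.mul_inv_rev, Units.val_mul, Units.val_mul]
  noncomm_ring

set_option maxHeartbeats 3200000 in
set_option synthInstance.maxHeartbeats 400000 in
/-- Paper: Lemma 7.6(3).
Let `A = R∗G` be a crossed product of a finite-dimensional central simple `K`-algebra
`R` (embedded in `A` via `j`) by a finite group `G`, such that the induced `G`-action on
`K = Z(R)` is faithful with fixed field `k` (lying in the center of `A`).  Then
`a ⊗ x ↦ (y ↦ a·y·x)` induces a ring isomorphism `A ⊗[k] K ≅ End_R A`, where `A` is
regarded as a right `R`-module. -/
theorem clifford_stmt5 {k K : Type*} [Field k] [Field K] [Algebra k K]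
    {R : Type*} [Ring R] [Algebra K R] [FiniteDimensional K R] [IsSimpleRing R]
    [Algebra.IsCentral K R]
    {A : Type*} [Ring A] [Algebra k A]
    {G : Type*} [Group G] [Finite G] [DecidableEq G]
    (j : R →+* A) (hj : Function.Injective j)
    (hjk : ∀ c : k, j (algebraMap K R (algebraMap k K c)) = algebraMap k A c)
    (u : G → Aˣ) (hu1 : u 1 = 1)
    (hconj : ∀ g : G,
      (fun a : A => (u g : A) * a * ((u g)⁻¹ : Aˣ)) '' Set.range j = Set.range j)
    (hcocycle : ∀ g h : G, ∃ r : R, ((u g : A) * u h : A) = (u (g * h) : A) * j r)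
    (hinternal : DirectSum.IsInternal (fun g : G => unitMulBaseAddSubgroup j (u g)))
    (hfaithful : ∀ g : G, g ≠ 1 →
      ∃ x : K, (u g : A) * j (algebraMap K R x) ≠ j (algebraMap K R x) * u g)
    (hfixed : ∀ x : K,
      (∀ g : G, (u g : A) * j (algebraMap K R x) = j (algebraMap K R x) * u g) →
      ∃ c : k, x = algebraMap k K c) :
    ∃ e : (A ⊗[k] K) ≃+* rightEndSubring A (Set.range j),
      ∀ (a : A) (x : K) (y : A),
        ((e (a ⊗ₜ[k] x) : AddMonoid.End A)) y = a * y * j (algebraMap K R x) := by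
  classical
  haveI : Fintype G := Fintype.ofFinite G
  -- the embedding of K into A
  set jK : K →+* A := j.comp (algebraMap K R) with hjKdef
  have hjK : ∀ x : K, jK x = j (algebraMap K R x) := fun _ => rfl
  have hjK_inj : Function.Injective jK := hj.comp (algebraMap K R).injective
  -- jK is central in j(R)
  have hcent : ∀ (x : K) (s : R), jK x * j s = j s * jK x := by
    intro x s
    rw [hjK, ← _root_.map_mul, ← _root_.map_mul, Algebra.commutes]
  -- construct the Galois action
  have hexists : ∀ (g : G) (x : K), ∃ y : K,
      (u g : A) * jK x * ((u g)⁻¹ : Aˣ) = jK y := by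
    intro g x
    have h1 : (u g : A) * jK x * ((u g)⁻¹ : Aˣ) ∈ Set.range j := by
      rw [← hconj g]
      exact ⟨jK x, ⟨algebraMap K R x, rfl⟩, rfl⟩
    obtain ⟨r, hr⟩ := h1
    have hc : ∀ s : R, s * r = r * s := by
      intro s
      have h2 : j s ∈ (fun a : A => (u g : A) * a * ((u g)⁻¹ : Aˣ)) '' Set.range j := by
        rw [hconj g]; exact ⟨s, rfl⟩
      obtain ⟨-, ⟨s', rfl⟩, hs'⟩ := h2
      have hs'' : (u g : A) * j s' * ((u g)⁻¹ : Aˣ) = j s := hs'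
      apply hj
      rw [_root_.map_mul, _root_.map_mul, hr, ← hs'', conj_mul', conj_mul', hcent]
    have hcen : r ∈ Subalgebra.center K R := Subalgebra.mem_center_iff.mpr hc
    have hbot : r ∈ (⊥ : Subalgebra K R) := Algebra.IsCentral.out hcen
    obtain ⟨y, hy⟩ := Algebra.mem_bot.mp hbot
    exact ⟨y, by rw [← hr, hjK, hy]⟩
  choose σK hσK using hexists
  have hσK' : ∀ (g : G) (x : K), (u g : A) * jK x = jK (σK g x) * u g := by
    intro g x
    rw [← hσK g x, Units.inv_mul_cancel_right]
  -- properties of σK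
  have hσadd : ∀ g x y, σK g (x + y) = σK g x + σK g y := by
    intro g x y
    apply hjK_inj
    rw [← hσK, _root_.map_add, _root_.map_add, mul_add, add_mul, hσK, hσK]
  have hσmul : ∀ g x y, σK g (x * y) = σK g x * σK g y := by
    intro g x y
    apply hjK_inj
    calc jK (σK g (x * y)) = (u g : A) * jK (x * y) * ((u g)⁻¹ : Aˣ) := (hσK g (x * y)).symm
      _ = ((u g : A) * jK x * ((u g)⁻¹ : Aˣ)) * ((u g : A) * jK y * ((u g)⁻¹ : Aˣ)) := by
          rw [conj_mul', _root_.map_mul]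
      _ = jK (σK g x) * jK (σK g y) := by rw [hσK, hσK]
      _ = jK (σK g x * σK g y) := (_root_.map_mul jK _ _).symm
  have hσone : ∀ g, σK g 1 = 1 := by
    intro g
    apply hjK_inj
    rw [← hσK, _root_.map_one, mul_one, Units.mul_inv]
  have hσ1 : ∀ x, σK 1 x = x := by
    intro x
    apply hjK_inj
    rw [← hσK, hu1]
    simp
  have hσcomp : ∀ g h x, σK g (σK h x) = σK (g * h) x := by
    intro g h x
    obtain ⟨r, hr⟩ := hcocycle g h
    apply hjK_inj
    have h3 : ((u g * u h : Aˣ) : A) = (u (g * h) : A) * j r := by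
      rw [Units.val_mul]; exact hr
    calc jK (σK g (σK h x))
        = (u g : A) * jK (σK h x) * ((u g)⁻¹ : Aˣ) := (hσK g _).symm
      _ = (u g : A) * ((u h : A) * jK x * ((u h)⁻¹ : Aˣ)) * ((u g)⁻¹ : Aˣ) := by
          rw [hσK h x]
      _ = ((u g * u h : Aˣ) : A) * jK x * (((u g * u h)⁻¹ : Aˣ) : A) := conj_conj _ _ _
      _ = (u (g * h) : A) * j r * jK x * (((u g * u h)⁻¹ : Aˣ) : A) := by rw [h3]
      _ = (u (g * h) : A) * jK x * j r * (((u g * u h)⁻¹ : Aˣ) : A) := by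
          rw [mul_assoc (u (g * h) : A), ← hcent x r, ← mul_assoc]
      _ = jK (σK (g * h) x) * ((u (g * h) : A) * j r) * (((u g * u h)⁻¹ : Aˣ) : A) := by
          rw [hσK' (g * h) x, mul_assoc (jK (σK (g * h) x))]
      _ = jK (σK (g * h) x) * ((u g * u h : Aˣ) : A) * (((u g * u h)⁻¹ : Aˣ) : A) := by
          rw [← h3]
      _ = jK (σK (g * h) x) := by rw [mul_assoc, Units.mul_inv, mul_one]
  have hσfixk : ∀ g c, σK g (algebraMap k K c) = algebraMap k K c := by
    intro g c
    apply hjK_inj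
    rw [← hσK]
    have : jK (algebraMap k K c) = algebraMap k A c := hjk c
    rw [this, ← Algebra.commutes c ((u g : A)), mul_assoc, Units.mul_inv, mul_one]
  have hσinv : ∀ g x, σK g (σK g⁻¹ x) = x := by
    intro g x
    rw [hσcomp, mul_inv_cancel, hσ1]
  have hσinv' : ∀ g x, σK g⁻¹ (σK g x) = x := by
    intro g x
    rw [hσcomp, inv_mul_cancel, hσ1]
  -- bundle into a monoid hom to AlgEquiv
  let σA : G → (K ≃ₐ[k] K) := fun g =>
    { toFun := σK g
      invFun := σK g⁻¹
      left_inv := hσinv' g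
      right_inv := hσinv g
      map_mul' := hσmul g
      map_add' := hσadd g
      commutes' := hσfixk g }
  have hσAapp : ∀ g x, σA g x = σK g x := fun _ _ => rfl
  let σM : G →* (K ≃ₐ[k] K) :=
    { toFun := σA
      map_one' := AlgEquiv.ext fun x => hσ1 x
      map_mul' := fun g h => AlgEquiv.ext fun x => (hσcomp g h x).symm }
  have hσMinj : Function.Injective σM := by
    rw [injective_iff_map_eq_one]
    intro g hg
    by_contra hg1
    obtain ⟨x, hx⟩ := hfaithful g hg1
    apply hx
    have hfixx : σK g x = x := by
      exact (by simpa using AlgEquiv.ext_iff.mp hg x : σM g x = x)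
    rw [← hjK x, hσK' g x, hfixx]
  have hσMfix : ∀ x : K, (∀ g : G, σM g x = x) → ∃ c : k, x = algebraMap k K c := by
    intro x hx
    apply hfixed
    intro g
    rw [← hjK x]
    have h2 : σK g x = x := hx g
    have h3 := hσK' g x
    rw [h2] at h3
    exact h3
  obtain ⟨b, N, hspan, hMN, hNM⟩ := crossed_key σM hσMinj hσMfix
  have hMN' : ∀ i i' : G, (∑ g, σK g (b i) * N g i') = if i = i' then 1 else 0 := hMN
  have hNM' : ∀ g g' : G, (∑ i, N g i * σK g' (b i)) = if g = g' then 1 else 0 := hNM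
  -- the algebra hom Θₐ : A ⊗[k] K →ₐ[k] Module.End k A
  let rmul : K →ₐ[k] Module.End k A :=
    { toFun := fun x =>
        { toFun := fun y => y * jK x
          map_add' := fun y z => add_mul y z _
          map_smul' := fun c y => smul_mul_assoc c y _ }
      map_one' := LinearMap.ext fun y => by simp
      map_mul' := fun x y => LinearMap.ext fun z => by
        show z * jK (x * y) = (z * jK y) * jK x
        rw [mul_comm x y, _root_.map_mul, ← mul_assoc]
      map_zero' := LinearMap.ext fun y => by simp
      map_add' := fun x y => LinearMap.ext fun z => by
        show z * jK (x + y) = z * jK x + z * jK y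
        rw [_root_.map_add, mul_add]
      commutes' := fun c => LinearMap.ext fun z => by
        show z * jK (algebraMap k K c) = algebraMap k (Module.End k A) c z
        rw [hjK, hjk c, Module.algebraMap_end_apply, Algebra.smul_def, ← Algebra.commutes c z] }
  have hcommute : ∀ (a : A) (x : K), Commute ((Algebra.lmul k A) a) (rmul x) := by
    intro a x
    apply LinearMap.ext
    intro y
    show a * (y * jK x) = (a * y) * jK x
    rw [mul_assoc]
  let Θa : (A ⊗[k] K) →ₐ[k] Module.End k A :=
    Algebra.TensorProduct.lift (Algebra.lmul k A) rmul hcommute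
  have hΘtmul : ∀ (a : A) (x : K) (y : A), Θa (a ⊗ₜ[k] x) y = a * y * jK x := by
    intro a x y
    rw [Algebra.TensorProduct.lift_tmul]
    show a * (y * jK x) = a * y * jK x
    rw [mul_assoc]
  -- membership of each Θa t in the right-endomorphism subring
  have hmemE : ∀ t : A ⊗[k] K,
      ((Θa t).toAddMonoidHom : AddMonoid.End A) ∈ rightEndSubring A (Set.range ⇑j) := by
    intro t
    induction t using TensorProduct.induction_on with
    | zero =>
      rw [_root_.map_zero]
      exact (rightEndSubring A (Set.range ⇑j)).zero_mem
    | tmul a x =>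
      rintro y s ⟨r, rfl⟩
      show Θa (a ⊗ₜ[k] x) (y * j r) = Θa (a ⊗ₜ[k] x) y * j r
      rw [hΘtmul, hΘtmul, ← mul_assoc a y, mul_assoc (a * y), ← hcent x r, ← mul_assoc]
    | add t1 t2 h1 h2 =>
      rw [_root_.map_add]
      exact (rightEndSubring A (Set.range ⇑j)).add_mem h1 h2
  set E := rightEndSubring A (Set.range ⇑j) with hE
  let Θ : (A ⊗[k] K) →+* E :=
    { toFun := fun t => ⟨(Θa t).toAddMonoidHom, hmemE t⟩
      map_one' := Subtype.ext (AddMonoidHom.ext fun y => by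
        show Θa 1 y = y
        rw [_root_.map_one]; rfl)
      map_mul' := fun t s => Subtype.ext (AddMonoidHom.ext fun y => by
        show Θa (t * s) y = Θa t (Θa s y)
        rw [_root_.map_mul]; rfl)
      map_zero' := Subtype.ext (AddMonoidHom.ext fun y => by
        show Θa 0 y = 0
        rw [_root_.map_zero]; rfl)
      map_add' := fun t s => Subtype.ext (AddMonoidHom.ext fun y => by
        show Θa (t + s) y = Θa t y + Θa s y
        rw [_root_.map_add]; rfl) }
  have hΘval : ∀ (t : A ⊗[k] K) (y : A), ((Θ t : E) : AddMonoid.End A) y = Θa t y :=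
    fun _ _ => rfl
  -- decomposition of tensors along the basis b
  have hdecomp : ∀ t : A ⊗[k] K, ∃ a : G → A, t = ∑ i, a i ⊗ₜ[k] b i := by
    intro t
    induction t using TensorProduct.induction_on with
    | zero => exact ⟨0, by simp⟩
    | tmul a0 y =>
      obtain ⟨c, hc⟩ := hspan y
      refine ⟨fun i => c i • a0, ?_⟩
      rw [hc, tmul_sum]
      refine Finset.sum_congr rfl fun i _ => ?_
      rw [← Algebra.smul_def, tmul_smul, smul_tmul']
    | add t1 t2 h1 h2 =>
      obtain ⟨a1, ha1⟩ := h1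
      obtain ⟨a2, ha2⟩ := h2
      refine ⟨a1 + a2, ?_⟩
      rw [ha1, ha2, ← Finset.sum_add_distrib]
      exact Finset.sum_congr rfl fun i _ => (add_tmul _ _ _).symm
  -- evaluation at the units
  have heval : ∀ (a : G → A) (g : G),
      Θa (∑ i, a i ⊗ₜ[k] b i) ((u g : A)) = (∑ i, a i * jK (σK g (b i))) * (u g : A) := by
    intro a g
    rw [_root_.map_sum, LinearMap.sum_apply, Finset.sum_mul]
    refine Finset.sum_congr rfl fun i _ => ?_
    rw [hΘtmul, mul_assoc, hσK' g (b i), ← mul_assoc]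
  -- injectivity
  have hinj : Function.Injective Θ := by
    rw [injective_iff_map_eq_zero]
    intro t ht
    obtain ⟨a, rfl⟩ := hdecomp t
    have hzero : ∀ y : A, Θa (∑ i, a i ⊗ₜ[k] b i) y = 0 :=
      fun y => congrArg (fun φ : E => (φ : AddMonoid.End A) y) ht
    have h1 : ∀ g : G, (∑ i, a i * jK (σK g (b i))) = 0 := by
      intro g
      have h2 := hzero ((u g : A))
      rw [heval] at h2
      have h3 := congrArg (fun z => z * (((u g)⁻¹ : Aˣ) : A)) h2
      simpa using h3
    have ha : ∀ i : G, a i = 0 := by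
      intro i0
      have h4 : (∑ g, (∑ i, a i * jK (σK g (b i))) * jK (N g i0)) = 0 := by
        simp [h1]
      rw [show (∑ g, (∑ i, a i * jK (σK g (b i))) * jK (N g i0))
            = ∑ g, ∑ i, a i * (jK (σK g (b i)) * jK (N g i0)) from
          Finset.sum_congr rfl fun g _ => by
            rw [Finset.sum_mul]
            exact Finset.sum_congr rfl fun i _ => mul_assoc _ _ _] at h4
      rw [Finset.sum_comm] at h4
      have h5 : ∀ i : G, (∑ g, a i * (jK (σK g (b i)) * jK (N g i0)))
          = a i * jK (if i = i0 then 1 else 0) := by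
        intro i
        rw [← Finset.mul_sum]
        congr 1
        calc (∑ g, jK (σK g (b i)) * jK (N g i0))
            = ∑ g, jK (σK g (b i) * N g i0) :=
              Finset.sum_congr rfl fun g _ => (_root_.map_mul jK _ _).symm
          _ = jK (∑ g, σK g (b i) * N g i0) := (_root_.map_sum jK _ _).symm
          _ = jK (if i = i0 then 1 else 0) := by rw [hMN' i i0]
      rw [Finset.sum_congr rfl fun i _ => h5 i] at h4
      simpa [apply_ite jK] using h4
    exact Finset.sum_eq_zero fun i _ => by rw [ha i, zero_tmul]
  -- surjectivity
  have hsurj : Function.Surjective Θ := by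
    rintro ⟨φ, hφ⟩
    have hφ' : ∀ (y : A) (r : R), φ (y * j r) = φ y * j r := fun y r => hφ y (j r) ⟨r, rfl⟩
    set d : G → A := fun g => φ ((u g : A)) * (((u g)⁻¹ : Aˣ) : A) with hd
    set a : G → A := fun i => ∑ g, d g * jK (N g i) with hadef
    refine ⟨∑ i, a i ⊗ₜ[k] b i, ?_⟩
    have hug : ∀ g' : G, Θa (∑ i, a i ⊗ₜ[k] b i) ((u g' : A)) = φ ((u g' : A)) := by
      intro g'
      rw [heval]
      have hsum : (∑ i, a i * jK (σK g' (b i))) = d g' := by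
        calc (∑ i, a i * jK (σK g' (b i)))
            = ∑ i, ∑ g, d g * (jK (N g i) * jK (σK g' (b i))) := by
              refine Finset.sum_congr rfl fun i _ => ?_
              rw [hadef]
              dsimp only
              rw [Finset.sum_mul]
              exact Finset.sum_congr rfl fun g _ => mul_assoc _ _ _
          _ = ∑ g, d g * jK (∑ i, N g i * σK g' (b i)) := by
              rw [Finset.sum_comm]
              refine Finset.sum_congr rfl fun g _ => ?_
              rw [_root_.map_sum jK, Finset.mul_sum]
              exact Finset.sum_congr rfl fun i _ => by rw [_root_.map_mul]
          _ = ∑ g, d g * jK (if g = g' then 1 else 0) :=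
              Finset.sum_congr rfl fun g _ => by rw [hNM' g g']
          _ = d g' := by simp [apply_ite jK]
      rw [hsum, hd]
      dsimp only
      rw [Units.inv_mul_cancel_right]
    apply Subtype.ext
    apply AddMonoidHom.ext
    intro y
    show Θa (∑ i, a i ⊗ₜ[k] b i) y = φ y
    obtain ⟨z, rfl⟩ := hinternal.surjective y
    induction z using DirectSum.induction_on with
    | zero => simp
    | of g m =>
      rw [DirectSum.coeAddMonoidHom_of]
      obtain ⟨r, hr⟩ := m.2
      rw [hr]
      have hE1 : Θa (∑ i, a i ⊗ₜ[k] b i) ((u g : A) * j r)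
          = Θa (∑ i, a i ⊗ₜ[k] b i) ((u g : A)) * j r :=
        hmemE (∑ i, a i ⊗ₜ[k] b i) ((u g : A)) (j r) ⟨r, rfl⟩
      rw [hE1, hφ', hug g]
    | add z1 z2 h1 h2 =>
      rw [_root_.map_add, _root_.map_add, h1, h2, _root_.map_add]
  refine ⟨RingEquiv.ofBijective Θ ⟨hinj, hsurj⟩, ?_⟩
  intro a0 x y
  show ((Θ (a0 ⊗ₜ[k] x) : E) : AddMonoid.End A) y = a0 * y * j (algebraMap K R x)
  rw [hΘval, hΘtmul]
  rfl
end

section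
/- Let k be a field and K/k a finite Galois field extension with Galois group G. Then every finite-dimensional central simple k-algebra A is Brauer equivalent over k (i.e., M_n(A) ≅ M_m(B) as k-algebras for some n, m ≥ 1) to a finite-dimensional central simple k-algebra B carrying a G-grading B = ⊕_{g∈G} B_g (additive subgroups with B_g·B_h ⊆ B_{gh}, internal direct sum) in which every homogeneous component B_g contains a unit of B, and whose identity component B_e is isomorphic as a k-algebra to A ⊗_k K. -/
open TensorProduct

universe u v w

namespace CliffordStmt6Aux

set_option linter.unusedSectionVars false

lemma isSimpleRing_of_ringEquiv {R S : Type*} [Ring R] [Ring S] (e : R ≃+* S)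
    [hR : IsSimpleRing R] : IsSimpleRing S := by
  refine ⟨?_⟩
  have : IsSimpleOrder (TwoSidedIdeal R) := hR.simple
  let oiso : TwoSidedIdeal S ≃o TwoSidedIdeal R :=
    { toFun := fun I => TwoSidedIdeal.comap e I
      invFun := fun I => TwoSidedIdeal.comap e.symm I
      left_inv := fun I => SetLike.ext fun x => by
        simp [TwoSidedIdeal.mem_comap]
      right_inv := fun I => SetLike.ext fun x => by
        simp [TwoSidedIdeal.mem_comap]
      map_rel_iff' := by
        intro I J
        constructor
        · intro hIJ x hx
          have h1 : e.symm x ∈ TwoSidedIdeal.comap e I := by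
            simp [TwoSidedIdeal.mem_comap, hx]
          have h2 := hIJ h1
          simpa [TwoSidedIdeal.mem_comap] using h2
        · intro hIJ x hx
          exact (TwoSidedIdeal.mem_comap _).mpr (hIJ ((TwoSidedIdeal.mem_comap _).mp hx)) }
  exact oiso.isSimpleOrder

lemma isCentral_of_algEquiv (k : Type*) {R S : Type*} [CommSemiring k] [Semiring R] [Semiring S]
    [Algebra k R] [Algebra k S] (e : R ≃ₐ[k] S) [hR : Algebra.IsCentral k R] :
    Algebra.IsCentral k S := by
  constructor
  intro x hx
  have hx' : e.symm x ∈ Subalgebra.center k R := by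
    rw [Subalgebra.mem_center_iff] at hx ⊢
    intro y
    apply e.injective
    simpa [map_mul] using hx (e y)
  have hbot := hR.out hx'
  rw [Algebra.mem_bot] at hbot ⊢
  obtain ⟨r, hr⟩ := hbot
  refine ⟨r, ?_⟩
  have := congrArg e hr
  simpa [e.commutes] using this

/-- `Matrix (Fin 1) (Fin 1) R` is isomorphic to `R` as a `k`-algebra. -/
noncomputable def matrixFinOneEquiv (k R : Type*) [CommSemiring k] [Ring R] [Algebra k R] :
    Matrix (Fin 1) (Fin 1) R ≃ₐ[k] R where
  toFun M := M 0 0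
  invFun r := Matrix.of fun _ _ => r
  left_inv M := by
    ext i j
    fin_cases i; fin_cases j; rfl
  right_inv r := rfl
  map_add' M N := rfl
  map_mul' M N := by
    simp [Matrix.mul_apply, Fin.sum_univ_one]
  commutes' r := by
    simp [Matrix.algebraMap_matrix_apply]

variable (k : Type u) (K : Type v) [Field k] [Field K] [Algebra k K]

/-- `ρ g x` is the `k`-endomorphism `y ↦ x * g y` of `K`. -/
noncomputable def rho (g : K ≃ₐ[k] K) : K →ₗ[k] Module.End k K :=
  (LinearMap.mulRight k (g.toLinearMap : Module.End k K)) ∘ₗ (Algebra.lmul k K).toLinearMap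

variable {k K}

@[simp] lemma rho_apply_apply (g : K ≃ₐ[k] K) (x y : K) : rho k K g x y = x * g y := by
  simp [rho, Module.End.mul_apply]

lemma rho_mul (g h : K ≃ₐ[k] K) (x y : K) :
    rho k K g x * rho k K h y = rho k K (g * h) (x * g y) := by
  apply LinearMap.ext
  intro z
  simp [Module.End.mul_apply, AlgEquiv.mul_apply, map_mul, mul_assoc]

lemma rho_one (x : K) : rho k K 1 x = (Algebra.lmul k K x : Module.End k K) := by
  apply LinearMap.ext
  intro z
  simp

lemma rho_one_right (g : K ≃ₐ[k] K) : rho k K g 1 = g.toLinearMap := by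
  apply LinearMap.ext
  intro z
  simp

lemma rho_injective (g : K ≃ₐ[k] K) : Function.Injective (rho k K g) := by
  intro x y hxy
  have h1 : rho k K g x 1 = rho k K g y 1 := by rw [hxy]
  simpa using h1

section Galois

variable [FiniteDimensional k K] [IsGalois k K] [DecidableEq (K ≃ₐ[k] K)]

noncomputable instance : Fintype (K ≃ₐ[k] K) := AlgEquiv.fintype k K

variable (k K)

noncomputable def Phi : ((K ≃ₐ[k] K) → K) →ₗ[k] Module.End k K :=
  ∑ g : K ≃ₐ[k] K, (rho k K g) ∘ₗ (LinearMap.proj g)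

variable {k K}

lemma Phi_apply (c : (K ≃ₐ[k] K) → K) : Phi k K c = ∑ g : K ≃ₐ[k] K, rho k K g (c g) := by
  simp [Phi]

lemma Phi_single (h : K ≃ₐ[k] K) (y : K) : Phi k K (Pi.single h y) = rho k K h y := by
  rw [Phi_apply]
  rw [Finset.sum_eq_single h]
  · simp
  · intro g _ hg
    rw [Pi.single_eq_of_ne hg, map_zero]
  · intro hh
    exact absurd (Finset.mem_univ h) hh

lemma Phi_injective : Function.Injective (Phi k K) := by
  have inj : Function.Injective (fun g : K ≃ₐ[k] K => (g : K →* K)) := by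
    intro g h hgh
    ext x
    exact DFunLike.congr_fun hgh x
  have li : LinearIndependent K (fun g : K ≃ₐ[k] K => ((g : K →* K) : K → K)) :=
    (linearIndependent_monoidHom K K).comp _ inj
  rw [injective_iff_map_eq_zero]
  intro c hc
  have key : ∀ g : K ≃ₐ[k] K, c g = 0 := by
    apply Fintype.linearIndependent_iff.mp li
    funext y
    have := congrFun (congrArg (fun f : Module.End k K => (f : K → K)) hc) y
    simpa [Phi_apply, LinearMap.sum_apply, Finset.sum_apply] using this
  funext g; exact key g

lemma Phi_finrank_eq :
    Module.finrank k ((K ≃ₐ[k] K) → K) = Module.finrank k (Module.End k K) := by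
  rw [Module.finrank_pi_fintype, Finset.sum_const, Finset.card_univ, smul_eq_mul,
    ← Nat.card_eq_fintype_card, IsGalois.card_aut_eq_finrank]
  exact (Module.finrank_linearMap k k K K).symm

noncomputable def eE : ((K ≃ₐ[k] K) → K) ≃ₗ[k] Module.End k K :=
  LinearEquiv.ofBijective (Phi k K) ⟨Phi_injective,
    (LinearMap.injective_iff_surjective_of_finrank_eq_finrank Phi_finrank_eq).mp Phi_injective⟩

variable (k K)

noncomputable def Pg (g : K ≃ₐ[k] K) : Module.End k K →ₗ[k] Module.End k K :=
  (rho k K g) ∘ₗ (LinearMap.proj g) ∘ₗ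
    ((eE (k := k) (K := K)).symm : Module.End k K →ₗ[k] ((K ≃ₐ[k] K) → K))

variable {k K}

lemma Pg_comp_rho (g h : K ≃ₐ[k] K) :
    (Pg k K g) ∘ₗ (rho k K h) = if g = h then rho k K h else 0 := by
  apply LinearMap.ext
  intro x
  have h1 : (eE (k := k) (K := K)).symm (rho k K h x) = Pi.single h x := by
    rw [LinearEquiv.symm_apply_eq]
    exact (Phi_single h x).symm
  simp only [Pg, LinearMap.comp_apply, LinearEquiv.coe_coe, h1, LinearMap.proj_apply,
    Pi.single_apply]
  split
  · next heq => subst heq; simp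
  · simp

section Tensor

variable (A : Type w) [Ring A] [Algebra k A]

noncomputable def tau (g : K ≃ₐ[k] K) : (A ⊗[k] K) →ₗ[k] (A ⊗[k] Module.End k K) :=
  LinearMap.lTensor A (rho k K g)

noncomputable def Wg (g : K ≃ₐ[k] K) : Submodule k (A ⊗[k] Module.End k K) :=
  LinearMap.range (tau A g)

noncomputable def Qg (g : K ≃ₐ[k] K) :
    (A ⊗[k] Module.End k K) →ₗ[k] (A ⊗[k] Module.End k K) :=
  LinearMap.lTensor A (Pg k K g)

lemma Qg_comp_tau (g h : K ≃ₐ[k] K) :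
    (Qg A g) ∘ₗ (tau A h) = if g = h then tau A h else 0 := by
  rw [Qg, tau, ← LinearMap.lTensor_comp, Pg_comp_rho]
  split
  · rfl
  · exact LinearMap.lTensor_zero A

lemma Qg_apply_of_mem {g h : K ≃ₐ[k] K} {b : A ⊗[k] Module.End k K} (hb : b ∈ Wg A h) :
    Qg A g b = if g = h then b else 0 := by
  obtain ⟨c, rfl⟩ := hb
  have h1 := DFunLike.congr_fun (Qg_comp_tau A g h) c
  rw [LinearMap.comp_apply] at h1
  rw [h1]
  split <;> simp

lemma tau_mul_tau (g h : K ≃ₐ[k] K) (c : A ⊗[k] K) (d : A ⊗[k] K) :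
    (tau A g c) * (tau A h d) ∈ Wg A (g * h) := by
  induction c using TensorProduct.induction_on with
  | zero => simp [Submodule.zero_mem]
  | add c1 c2 h1 h2 =>
    rw [map_add, add_mul]
    exact Submodule.add_mem _ h1 h2
  | tmul a x =>
    induction d using TensorProduct.induction_on with
    | zero => simp [Submodule.zero_mem]
    | add d1 d2 h1 h2 =>
      rw [map_add, mul_add]
      exact Submodule.add_mem _ h1 h2
    | tmul b y =>
      refine ⟨(a * b) ⊗ₜ (x * g y), ?_⟩
      simp only [tau, LinearMap.lTensor_tmul, Algebra.TensorProduct.tmul_mul_tmul, ← rho_mul]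

end Tensor

end Galois
end CliffordStmt6Aux

namespace CliffordStmt6Aux
open scoped Classical
section Galois
variable {k : Type u} {K : Type v} [Field k] [Field K] [Algebra k K]
variable [FiniteDimensional k K] [IsGalois k K] [DecidableEq (K ≃ₐ[k] K)]
variable (A : Type w) [Ring A] [Algebra k A]

set_option maxHeartbeats 1000000 in
set_option synthInstance.maxHeartbeats 400000 in
lemma internal_grading :
    DirectSum.IsInternal (fun g : K ≃ₐ[k] K => (Wg (k := k) (K := K) A g).toAddSubgroup) := by
  classical
  constructor
  · rw [injective_iff_map_eq_zero]
    intro x hx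
    have key : ∀ g : K ≃ₐ[k] K, ((x g : A ⊗[k] Module.End k K)) = 0 := by
      intro g
      by_cases hg : g ∈ DFinsupp.support x
      · have hsum : (DirectSum.coeAddMonoidHom (fun g => (Wg (k := k) (K := K) A g).toAddSubgroup)) x
            = ∑ i ∈ DFinsupp.support x, ((x i : A ⊗[k] Module.End k K)) := by
          conv_lhs => rw [← DirectSum.sum_support_of x]
          rw [map_sum]
          simp [DirectSum.coeAddMonoidHom_of]
        have h0 : Qg A g (∑ i ∈ DFinsupp.support x,
            ((x i : A ⊗[k] Module.End k K))) = 0 := by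
          rw [← hsum, hx, map_zero]
        rw [map_sum] at h0
        have heach : ∀ i ∈ DFinsupp.support x,
            Qg A g ((x i : A ⊗[k] Module.End k K))
            = if g = i then ((x g : A ⊗[k] Module.End k K)) else 0 := by
          intro i _
          rw [Qg_apply_of_mem A ((Submodule.mem_toAddSubgroup _).mp (x i).2)]
          by_cases hgi : g = i
          · subst hgi; simp
          · simp [hgi]
        rw [Finset.sum_congr rfl heach, Finset.sum_ite_eq] at h0
        simpa [hg] using h0
      · rw [DFinsupp.notMem_support_iff.mp hg]
        rfl
    exact DFinsupp.ext fun g => Subtype.ext (key g)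
  · intro b
    induction b using TensorProduct.induction_on with
    | zero => exact ⟨0, map_zero _⟩
    | add u v hu hv =>
      obtain ⟨xu, hxu⟩ := hu
      obtain ⟨xv, hxv⟩ := hv
      exact ⟨xu + xv, by rw [map_add, hxu, hxv]⟩
    | tmul a f =>
      refine ⟨∑ g : K ≃ₐ[k] K,
        DirectSum.of (fun g => ((Wg (k := k) (K := K) A g).toAddSubgroup : AddSubgroup _)) g
          ⟨tau A g (a ⊗ₜ ((eE (k := k) (K := K)).symm f g)),
            (Submodule.mem_toAddSubgroup _).mpr ⟨_, rfl⟩⟩, ?_⟩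
      rw [map_sum]
      simp only [DirectSum.coeAddMonoidHom_of]
      have hf : f = ∑ g : K ≃ₐ[k] K, rho k K g ((eE (k := k) (K := K)).symm f g) := by
        conv_lhs => rw [← (eE (k := k) (K := K)).apply_symm_apply f]
        exact Phi_apply _
      conv_rhs => rw [hf, TensorProduct.tmul_sum]
      refine Finset.sum_congr rfl fun g _ => ?_
      simp [tau]
set_option synthInstance.maxHeartbeats 400000 in
set_option maxHeartbeats 1000000 in
lemma one_mem_W : (1 : A ⊗[k] Module.End k K) ∈ Wg (k := k) (K := K) A 1 := by
  refine ⟨(1 : A) ⊗ₜ (1 : K), ?_⟩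
  have h1 : rho k K 1 (1 : K) = (1 : Module.End k K) := by
    apply LinearMap.ext; intro z; simp
  simp [tau, h1, Algebra.TensorProduct.one_def]

set_option synthInstance.maxHeartbeats 400000 in
set_option maxHeartbeats 1000000 in
lemma unit_mem (g : K ≃ₐ[k] K) :
    ∃ u : (A ⊗[k] Module.End k K)ˣ, (u : A ⊗[k] Module.End k K) ∈ Wg (k := k) (K := K) A g := by
  refine ⟨Units.map
    ((Algebra.TensorProduct.includeRight :
      Module.End k K →ₐ[k] (A ⊗[k] Module.End k K)).toRingHom.toMonoidHom)
    ⟨g.toLinearMap, g.symm.toLinearMap, ?_, ?_⟩, ?_⟩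
  · apply LinearMap.ext; intro z; simp [Module.End.mul_apply]
  · apply LinearMap.ext; intro z; simp [Module.End.mul_apply]
  · refine ⟨(1 : A) ⊗ₜ (1 : K), ?_⟩
    simp [tau, rho_one_right]

set_option synthInstance.maxHeartbeats 400000 in
set_option maxHeartbeats 1000000 in
lemma base_ex : ∃ φ : (A ⊗[k] K) →ₐ[k] (A ⊗[k] Module.End k K), Function.Injective φ ∧
    ∀ b : A ⊗[k] Module.End k K, b ∈ Wg (k := k) (K := K) A 1 ↔ b ∈ Set.range φ := by
  have hkey : ∀ c : A ⊗[k] K,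
      (Algebra.TensorProduct.map (AlgHom.id k A) (Algebra.lmul k K)) c = tau A 1 c := by
    intro c
    induction c using TensorProduct.induction_on with
    | zero => simp
    | add u v hu hv => rw [map_add, map_add, hu, hv]
    | tmul a x => simp [tau, rho_one]
  refine ⟨Algebra.TensorProduct.map (AlgHom.id k A) (Algebra.lmul k K), ?_, ?_⟩
  · have hinj : Function.Injective (tau (k := k) (K := K) A (1 : K ≃ₐ[k] K)) :=
      Module.Flat.lTensor_preserves_injective_linearMap (rho k K 1) (rho_injective 1)
    intro x y hxy
    apply hinj
    rw [← hkey, ← hkey, hxy]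
  · intro b
    constructor
    · rintro ⟨c, rfl⟩
      exact ⟨c, hkey c⟩
    · rintro ⟨c, rfl⟩
      exact ⟨c, (hkey c).symm⟩

end Galois
end CliffordStmt6Aux


/-- A witness that the central simple `k`-algebra `A` is Brauer-equivalent to a crossed
product `B` of `K` by the Galois group `G = Gal(K/k)`, whose base component (the
identity homogeneous component) is `k`-algebra isomorphic to `A ⊗[k] K`. -/
structure GaloisCrossedProductRep (k : Type u) (K : Type v) [Field k] [Field K]
    [Algebra k K] [DecidableEq (K ≃ₐ[k] K)] (A : Type w) [Ring A] [Algebra k A] where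
  /-- the crossed product algebra -/
  B : Type (max v w)
  [ringB : Ring B]
  [algB : Algebra k B]
  findim : FiniteDimensional k B
  simple : IsSimpleRing B
  central : Algebra.IsCentral k B
  /-- `A` and `B` are Brauer equivalent over `k`:
  `Mₙ(A) ≅ Mₘ(B)` as `k`-algebras for some `n, m ≥ 1`. -/
  brauer : ∃ n m : ℕ, 0 < n ∧ 0 < m ∧
    Nonempty (Matrix (Fin n) (Fin n) A ≃ₐ[k] Matrix (Fin m) (Fin m) B)
  /-- a `G`-grading of `B` by additive subgroups, `G = Gal(K/k)` -/
  grading : (K ≃ₐ[k] K) → AddSubgroup B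
  one_mem : (1 : B) ∈ grading 1
  mul_mem : ∀ g h : K ≃ₐ[k] K, ∀ x ∈ grading g, ∀ y ∈ grading h,
    x * y ∈ grading (g * h)
  internal : DirectSum.IsInternal grading
  /-- every homogeneous component contains a unit of `B`, i.e. `B` is a crossed product -/
  units : ∀ g : K ≃ₐ[k] K, ∃ u : Bˣ, (u : B) ∈ grading g
  /-- the identity component of `B` is `k`-algebra isomorphic to `A ⊗[k] K` -/
  base : ∃ φ : (A ⊗[k] K) →ₐ[k] B, Function.Injective φ ∧
    ∀ b : B, b ∈ grading 1 ↔ b ∈ Set.range φ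

/-- Paper: surjectivity claim of Lemma 7.6(2).
Let `K/k` be a finite Galois extension of fields with Galois group `G`.  Every
finite-dimensional central simple `k`-algebra `A` is Brauer equivalent over `k` to a
finite-dimensional central simple `k`-algebra `B` carrying a `G`-grading with a unit in
every homogeneous component (a crossed product) whose identity component is `k`-algebra
isomorphic to `A ⊗[k] K`. -/
theorem clifford_stmt6 (k : Type u) (K : Type v) [Field k] [Field K] [Algebra k K]
    [FiniteDimensional k K] [IsGalois k K] [DecidableEq (K ≃ₐ[k] K)]
    (A : Type w) [Ring A] [Algebra k A] [FiniteDimensional k A] [IsSimpleRing A]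
    [Algebra.IsCentral k A] :
    Nonempty (GaloisCrossedProductRep k K A) := by
  classical
  have hn : 0 < Module.finrank k K := Module.finrank_pos
  haveI : Nonempty (Fin (Module.finrank k K)) := Fin.pos_iff_nonempty.mp hn
  let eB : (A ⊗[k] Module.End k K) ≃ₐ[k]
      Matrix (Fin (Module.finrank k K)) (Fin (Module.finrank k K)) A :=
    (Algebra.TensorProduct.congr (AlgEquiv.refl (A₁ := A))
      (algEquivMatrix (Module.finBasis k K))).trans
      (matrixEquivTensor (Fin (Module.finrank k K)) k A).symm
  haveI hfd : FiniteDimensional k (A ⊗[k] Module.End k K) :=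
    Module.Finite.equiv eB.symm.toLinearEquiv
  haveI hsimp : IsSimpleRing (A ⊗[k] Module.End k K) :=
    CliffordStmt6Aux.isSimpleRing_of_ringEquiv eB.symm.toRingEquiv
  haveI hcent : Algebra.IsCentral k (A ⊗[k] Module.End k K) :=
    CliffordStmt6Aux.isCentral_of_algEquiv k eB.symm
  obtain ⟨φ, hφ1, hφ2⟩ := CliffordStmt6Aux.base_ex (k := k) (K := K) A
  refine ⟨{ B := A ⊗[k] Module.End k K
            findim := hfd
            simple := hsimp
            central := hcent
            brauer := ⟨Module.finrank k K, 1, hn, one_pos,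
              ⟨eB.symm.trans (CliffordStmt6Aux.matrixFinOneEquiv k
                (A ⊗[k] Module.End k K)).symm⟩⟩
            grading := fun g => (CliffordStmt6Aux.Wg A g).toAddSubgroup
            one_mem := (Submodule.mem_toAddSubgroup _).mpr (CliffordStmt6Aux.one_mem_W A)
            mul_mem := ?_
            internal := CliffordStmt6Aux.internal_grading A
            units := fun g => (CliffordStmt6Aux.unit_mem A g).imp fun u hu =>
              (Submodule.mem_toAddSubgroup _).mpr hu
            base := ⟨φ, hφ1, fun b => (Submodule.mem_toAddSubgroup _).trans (hφ2 b)⟩ }⟩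
  intro g h x hx y hy
  rw [Submodule.mem_toAddSubgroup] at hx hy ⊢
  obtain ⟨c, rfl⟩ := hx
  obtain ⟨d, rfl⟩ := hy
  exact CliffordStmt6Aux.tau_mul_tau A g h c d
end

section
/- Let N be the free abelian group on generators p_i indexed by i ∈ ℤ (i.e., the direct sum ⊕_{i∈ℤ} ℤ, written multiplicatively), and let ℤ act on N by letting the generator w shift indices by two: w(p_i) = p_{i+2}. Let H := N ⋊ ℤ be the corresponding semidirect product. Then the center of H is trivial: Subgroup.center H = ⊥. -/
/-- The shift-by-two automorphism `p_i ↦ p_{i+2}` of the free abelian group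
`N = ⊕_{i ∈ ℤ} ℤ` (written multiplicatively). -/
noncomputable def emShift : MulAut (Multiplicative (ℤ →₀ ℤ)) :=
  AddEquiv.toMultiplicative (Finsupp.domCongr (Equiv.addRight (2 : ℤ)))

/-- The action of `ℤ` on `N` in which the generator `w` acts by `emShift`,
i.e. `n` acts on `f : ℤ →₀ ℤ` by `(n • f) i = f (i - 2n)`. -/
noncomputable def emAction : Multiplicative ℤ →* MulAut (Multiplicative (ℤ →₀ ℤ)) :=
  zpowersHom (MulAut (Multiplicative (ℤ →₀ ℤ))) emShift

/-- The Eilenberg–MacLane group `H = N ⋊ ℤ` for the case `G = ℤ/2`: the semidirect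
product of the free abelian group on generators `p_i (i ∈ ℤ)` by `ℤ`, the generator `w`
acting by `p_i ↦ p_{i+2}`. -/
abbrev EMGroup : Type :=
  SemidirectProduct (Multiplicative (ℤ →₀ ℤ)) (Multiplicative ℤ) emAction

lemma emShift_single (a b : ℤ) :
    emShift (Multiplicative.ofAdd (Finsupp.single a b))
      = Multiplicative.ofAdd (Finsupp.single (a + 2) b) := by
  show Multiplicative.ofAdd (Finsupp.equivMapDomain (Equiv.addRight (2:ℤ)) (Finsupp.single a b)) = _
  rw [Finsupp.equivMapDomain_single]
  rfl

lemma emShift_symm_single (a b : ℤ) :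
    emShift⁻¹ (Multiplicative.ofAdd (Finsupp.single a b))
      = Multiplicative.ofAdd (Finsupp.single (a - 2) b) := by
  have := emShift_single (a - 2) b
  rw [sub_add_cancel] at this
  rw [← this]
  exact (emShift.symm_apply_apply _)

lemma emShift_zpow_single (z b : ℤ) : ∀ a,
    (emShift ^ z) (Multiplicative.ofAdd (Finsupp.single a b))
      = Multiplicative.ofAdd (Finsupp.single (a + 2 * z) b) := by
  induction z using Int.induction_on with
  | zero => simp
  | succ n ih =>
    intro a
    rw [zpow_add, zpow_one, MulAut.mul_apply, emShift_single, ih]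
    ring_nf
  | pred n ih =>
    intro a
    rw [zpow_sub, zpow_one, MulAut.mul_apply, emShift_symm_single, ih]
    ring_nf

lemma shift_inv_eq_zero (f : ℤ →₀ ℤ) (h : ∀ j : ℤ, f (j - 2) = f j) : f = 0 := by
  by_contra hne
  have hsupp : f.support.Nonempty := Finsupp.support_nonempty_iff.mpr hne
  set m := f.support.max' hsupp with hm
  have hmem : m ∈ f.support := f.support.max'_mem hsupp
  have h2 : f (m + 2) ≠ 0 := by
    have := h (m + 2)
    simp only [add_sub_cancel_right] at this
    rw [← this]
    exact Finsupp.mem_support_iff.mp hmem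
  have : m + 2 ∈ f.support := Finsupp.mem_support_iff.mpr h2
  have := f.support.le_max' _ this
  omega

/-- Paper: claim in the proof of Theorem 5.5.
The center of the group `H = N ⋊ ℤ`, with `N` free abelian on `p_i (i ∈ ℤ)` and the
generator `w` of `ℤ` acting by `w (p_i) = p_{i+2}`, is trivial. -/
theorem clifford_stmt7 : Subgroup.center EMGroup = ⊥ := by
  rw [eq_bot_iff]
  intro g hg
  rw [Subgroup.mem_center_iff] at hg
  -- step 1: left component is trivial
  have h1 := congrArg SemidirectProduct.left
    (hg ⟨1, Multiplicative.ofAdd 1⟩)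
  rw [SemidirectProduct.mul_left, SemidirectProduct.mul_left] at h1
  simp only [SemidirectProduct.mul_left, one_mul, map_one, mul_one, emAction,
    zpowersHom_apply, toAdd_ofAdd, zpow_one] at h1
  have hleft : g.left = 1 := by
    have hf : Multiplicative.toAdd g.left = 0 := by
      apply shift_inv_eq_zero
      intro j
      have := congrArg (fun x : Multiplicative (ℤ →₀ ℤ) => (Multiplicative.toAdd x) j) h1
      simpa [emShift, Finsupp.domCongr, Finsupp.equivMapDomain_apply, sub_eq_add_neg] using this
    simpa using congrArg Multiplicative.ofAdd hf
  -- step 2: right component is trivial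
  have h2 := congrArg SemidirectProduct.left
    (hg ⟨Multiplicative.ofAdd (Finsupp.single 0 1), 1⟩)
  rw [SemidirectProduct.mul_left, SemidirectProduct.mul_left] at h2
  simp only [SemidirectProduct.mul_left, map_one, MulAut.one_apply, hleft, one_mul,
    mul_one, emAction, zpowersHom_apply] at h2
  rw [emShift_zpow_single] at h2
  have h3 : Finsupp.single (0:ℤ) (1:ℤ) = Finsupp.single (0 + 2 * Multiplicative.toAdd g.right) 1 :=
    Multiplicative.ofAdd.injective h2
  rw [Finsupp.single_eq_single_iff] at h3
  have hz : Multiplicative.toAdd g.right = 0 := by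
    rcases h3 with ⟨h, -⟩ | ⟨h, -⟩ <;> omega
  have hright : g.right = 1 := by simpa using congrArg Multiplicative.ofAdd hz
  rw [Subgroup.mem_bot]
  exact SemidirectProduct.ext hleft hright
end

section
/- Let K be a nontrivial commutative ring and X a type with at least two elements. Then the center of the group algebra K[FreeGroup X] (MonoidAlgebra K (FreeGroup X)) equals the image of K under the canonical map x ↦ x·1, i.e., the group algebra of a non-abelian free group is K-central. -/
open FreeGroup List

private lemma chain'_reduce {α : Type*} [DecidableEq α] (L : List (α × Bool)) :
    List.Chain' (fun a b : α × Bool => ¬(a.1 = b.1 ∧ a.2 = !b.2)) (FreeGroup.reduce L) := by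
  induction L with
  | nil => exact List.isChain_nil
  | cons x L ih =>
    rw [FreeGroup.reduce.cons]
    cases h : FreeGroup.reduce L with
    | nil => exact List.isChain_singleton x
    | cons hd tl =>
      rw [h] at ih
      by_cases hc : x.1 = hd.1 ∧ x.2 = !hd.2
      · simp only [hc, if_true]
        exact ih.tail
      · simp only [hc, if_false]
        exact List.isChain_cons_cons.2 ⟨fun hh => hc ⟨hh.1, hh.2⟩, ih⟩

private lemma reduce_eq_self_of_chain' {α : Type*} [DecidableEq α] {L : List (α × Bool)}
    (h : List.Chain' (fun a b : α × Bool => ¬(a.1 = b.1 ∧ a.2 = !b.2)) L) :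
    FreeGroup.reduce L = L := by
  induction L with
  | nil => rfl
  | cons x L ih =>
    rw [FreeGroup.reduce.cons, ih h.tail]
    cases L with
    | nil => rfl
    | cons hd tl =>
      have : ¬(x.1 = hd.1 ∧ x.2 = !hd.2) := (List.isChain_cons_cons.1 h).1
      simp [this]

private lemma aux_infinite {X : Type*} [DecidableEq X] [Nontrivial X] {y : FreeGroup X}
    (hy : y ≠ 1) :
    ∃ f : ℕ → FreeGroup X, Function.Injective f ∧ ∀ n, ∃ g, f n = g * y * g⁻¹ := by
  set w := y.toWord with hwdef
  have hw : w ≠ [] := fun h => hy (FreeGroup.toWord_eq_nil_iff.1 h)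
  obtain ⟨c, hc⟩ := exists_ne (w.head hw).1
  set lst := w.getLast hw with hlst
  set d : Bool := if lst.1 = c then !lst.2 else true with hd
  set z : FreeGroup X := FreeGroup.mk [(c, d)] with hz
  have hzpow : ∀ n : ℕ, z ^ n = FreeGroup.mk (List.replicate n (c, d)) := by
    intro n
    induction n with
    | zero => rfl
    | succ n ih =>
      rw [pow_succ, ih, hz, FreeGroup.mul_mk, List.replicate_succ']
  have hinv : ∀ n : ℕ, FreeGroup.invRev (List.replicate n (c, d)) = List.replicate n (c, !d) := by
    intro n
    simp [FreeGroup.invRev, List.map_replicate, List.reverse_replicate]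
  refine ⟨fun n => z ^ n * y * (z ^ n)⁻¹, ?_, fun n => ⟨z ^ n, rfl⟩⟩
  have htoWord : ∀ n : ℕ, (z ^ n * y * (z ^ n)⁻¹).toWord =
      (List.replicate n (c, d) ++ w) ++ List.replicate n (c, !d) := by
    intro n
    have h1 : z ^ n * y * (z ^ n)⁻¹ =
        FreeGroup.mk ((List.replicate n (c, d) ++ w) ++ List.replicate n (c, !d)) := by
      conv_lhs => rw [hzpow, ← FreeGroup.mk_toWord (x := y), ← hwdef]
      rw [FreeGroup.mul_mk, FreeGroup.inv_mk, hinv, FreeGroup.mul_mk]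
    rw [h1, FreeGroup.toWord_mk]
    apply reduce_eq_self_of_chain'
    have hchain_w : List.Chain' (fun a b : X × Bool => ¬(a.1 = b.1 ∧ a.2 = !b.2)) w := by
      have := chain'_reduce w
      rwa [hwdef, FreeGroup.reduce_toWord] at this
    refine List.isChain_append.2 ⟨List.isChain_append.2 ⟨?_, hchain_w, ?_⟩, ?_, ?_⟩
    · exact List.isChain_replicate_of_rel n (by simp)
    · intro p hp b hb
      have hpe : p = (c, d) := by
        obtain ⟨hne, hp'⟩ := List.mem_getLast?_eq_getLast hp
        exact hp' ▸ List.eq_of_mem_replicate (List.getLast_mem hne)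
      have hbe : b = w.head hw := by
        rw [List.head?_eq_head hw] at hb
        exact (Option.mem_some_iff.1 hb).symm
      subst hpe hbe
      simp only [not_and]
      intro h1
      exact fun _ => hc h1
    · exact List.isChain_replicate_of_rel n (by simp)
    · intro p hp b hb
      rw [List.getLast?_append_of_ne_nil _ hw] at hp
      have hpe : p = lst := by
        obtain ⟨hne, hp'⟩ := List.mem_getLast?_eq_getLast hp
        exact hp'
      have hbe : b = (c, !d) :=
        List.eq_of_mem_replicate (List.mem_of_mem_head? hb)
      subst hpe hbe
      simp only [Bool.not_not, not_and]
      intro h1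
      rw [hd, if_pos h1]
      simp
  intro n m hnm
  have := congrArg List.length (htoWord n ▸ htoWord m ▸ congrArg FreeGroup.toWord hnm)
  simp only [List.length_append, List.length_replicate] at this
  omega

/-- Paper: claim in the proof of Theorem 5.5.
For a nontrivial commutative ring `K` and a type `X` with at least two elements, the
group algebra `K[FreeGroup X]` is `K`-central: its center is exactly the image of `K`
under the canonical map `x ↦ x·1`. -/
theorem clifford_stmt10 {K : Type*} [CommRing K] [Nontrivial K]
    {X : Type*} [Nontrivial X] :
    Subring.center (MonoidAlgebra K (FreeGroup X)) =
      (algebraMap K (MonoidAlgebra K (FreeGroup X))).range := by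
  classical
  ext a
  simp only [Subring.mem_center_iff, RingHom.mem_range]
  constructor
  · intro ha
    have key : ∀ g x : FreeGroup X, a.coeff (g * x * g⁻¹) = a.coeff x := by
      intro g x
      have h : (MonoidAlgebra.single g (1:K) * a : MonoidAlgebra K (FreeGroup X)).coeff (g * x) = (a * MonoidAlgebra.single g (1:K) : MonoidAlgebra K (FreeGroup X)).coeff (g * x) := by
        rw [ha]
      rw [MonoidAlgebra.coeff_single_mul_apply, MonoidAlgebra.coeff_mul_single_apply, one_mul, mul_one,
        inv_mul_cancel_left] at h
      exact h.symm
    have hsupp : a.coeff.support ⊆ {1} := by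
      intro y hy
      simp only [Finset.mem_singleton]
      by_contra hne
      obtain ⟨f, hfinj, hfc⟩ := aux_infinite hne
      have hmem : ∀ n, f n ∈ (a.coeff.support : Set (FreeGroup X)) := by
        intro n
        obtain ⟨g, hg⟩ := hfc n
        rw [Finsupp.mem_support_iff] at hy
        simp only [Finset.coe_mem, Finset.mem_coe, Finsupp.mem_support_iff]
        rw [hg, key]
        exact hy
      exact Set.infinite_range_of_injective hfinj
        ((a.coeff.support.finite_toSet).subset (Set.range_subset_iff.2 hmem))
    refine ⟨a.coeff 1, ?_⟩
    rw [Algebra.algebraMap_eq_smul_one, MonoidAlgebra.one_def]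
    rw [← MonoidAlgebra.coeff_inj, MonoidAlgebra.coeff_smul, MonoidAlgebra.coeff_single,
      Finsupp.support_subset_singleton.1 hsupp]
    simp [Finsupp.smul_single]
  · rintro ⟨r, rfl⟩
    intro b
    exact (Algebra.commutes r b).symm
end

section
/- Let K be a nontrivial commutative ring. Let N be the free abelian group on generators p_i indexed by i ∈ ℤ (the direct sum ⊕_{i∈ℤ} ℤ, written multiplicatively), with ℤ acting by the shift w(p_i) = p_{i+2}, and let H := N ⋊ ℤ be the semidirect product. Then the center of the group algebra K[H] (MonoidAlgebra K H) equals the image of K under the canonical map x ↦ x·1, i.e., K[H] is a K-central algebra. -/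
lemma emShift_apply (f : ℤ →₀ ℤ) (a : ℤ) :
    Multiplicative.toAdd (emShift (Multiplicative.ofAdd f)) a = f (a - 2) := by
  simp [emShift, Finsupp.domCongr_apply, Finsupp.equivMapDomain_apply, sub_eq_add_neg]

lemma emShift_inv_apply (f : ℤ →₀ ℤ) (a : ℤ) :
    Multiplicative.toAdd (emShift⁻¹ (Multiplicative.ofAdd f)) a = f (a + 2) := by
  have h : emShift⁻¹ (Multiplicative.ofAdd f) = emShift.symm (Multiplicative.ofAdd f) := rfl
  rw [h]
  simp [emShift, Finsupp.domCongr_apply, Finsupp.equivMapDomain_apply]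

lemma emShift_zpow_apply (n : ℤ) : ∀ (f : ℤ →₀ ℤ) (a : ℤ),
    Multiplicative.toAdd ((emShift ^ n) (Multiplicative.ofAdd f)) a = f (a - 2 * n) := by
  induction n using Int.induction_on with
  | zero => intro f a; simp
  | succ n ih =>
    intro f a
    have h1 : (emShift ^ ((n : ℤ) + 1)) (Multiplicative.ofAdd f)
        = (emShift ^ (n : ℤ)) (emShift (Multiplicative.ofAdd f)) := by
      rw [zpow_add, zpow_one, MulAut.mul_apply]
    have h2 : emShift (Multiplicative.ofAdd f)
        = Multiplicative.ofAdd (Multiplicative.toAdd (emShift (Multiplicative.ofAdd f))) := rfl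
    rw [h1, h2, ih, emShift_apply]
    congr 1; ring
  | pred n ih =>
    intro f a
    have h1 : (emShift ^ (-(n : ℤ) - 1)) (Multiplicative.ofAdd f)
        = (emShift ^ (-(n : ℤ))) (emShift⁻¹ (Multiplicative.ofAdd f)) := by
      rw [sub_eq_add_neg, zpow_add, zpow_neg_one, MulAut.mul_apply]
    have h2 : emShift⁻¹ (Multiplicative.ofAdd f)
        = Multiplicative.ofAdd (Multiplicative.toAdd (emShift⁻¹ (Multiplicative.ofAdd f))) := rfl
    rw [h1, h2, ih, emShift_inv_apply]
    congr 1; ring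

lemma emAction_apply (n : Multiplicative ℤ) (f : ℤ →₀ ℤ) (a : ℤ) :
    Multiplicative.toAdd ((emAction n) (Multiplicative.ofAdd f)) a
      = f (a - 2 * Multiplicative.toAdd n) := by
  have : emAction n = emShift ^ (Multiplicative.toAdd n) := rfl
  rw [this, emShift_zpow_apply]


/-- Paper: claim in the proof of Theorem 5.5.
For a nontrivial commutative ring `K` and the semidirect product `H = N ⋊ ℤ` (with `N`
free abelian on `p_i (i ∈ ℤ)` and the generator of `ℤ` acting by `p_i ↦ p_{i+2}`), the
group algebra `K[H]` is `K`-central: its center is exactly the image of `K` under the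
canonical map `x ↦ x·1`. -/
theorem clifford_stmt11 {K : Type*} [CommRing K] [Nontrivial K] :
    Subring.center (MonoidAlgebra K EMGroup) =
      (algebraMap K (MonoidAlgebra K EMGroup)).range := by
  ext x
  constructor
  · intro hx
    have key : ∀ g h : EMGroup, x.coeff (g * h * g⁻¹) = x.coeff h := by
      intro g h
      have h1 := Subring.mem_center_iff.mp hx (MonoidAlgebra.single g 1)
      have h2 : ((MonoidAlgebra.single g 1 * x : MonoidAlgebra K EMGroup)).coeff (g * h)
          = ((x * MonoidAlgebra.single g 1 : MonoidAlgebra K EMGroup)).coeff (g * h) := by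
        rw [h1]
      simpa [mul_assoc] using h2.symm
    -- support is contained in {1}
    have hsupp : ∀ a ∈ x.coeff.support, a = 1 := by
      intro h hmem
      by_contra hne
      rw [Finsupp.mem_support_iff] at hmem
      by_cases hr : h.right = 1
      · -- left component nonzero; conjugate by inr
        have hl : h.left ≠ 1 := by
          intro hl; exact hne (SemidirectProduct.ext hl hr)
        set f : ℤ →₀ ℤ := Multiplicative.toAdd h.left with hf
        have hf0 : f ≠ 0 := by
          intro h0
          apply hl
          have : h.left = Multiplicative.ofAdd (0 : ℤ →₀ ℤ) := by
            rw [← h0]; rfl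
          simpa using this
        set c : ℤ → EMGroup := fun k =>
          SemidirectProduct.inr (Multiplicative.ofAdd k) * h *
            (SemidirectProduct.inr (Multiplicative.ofAdd k))⁻¹ with hc
        have hcleft : ∀ k a, Multiplicative.toAdd (c k).left a = f (a - 2 * k) := by
          intro k a
          have : (c k).left = emAction (Multiplicative.ofAdd k) h.left := by
            simp [hc, SemidirectProduct.mul_left, SemidirectProduct.inv_left,
              SemidirectProduct.mul_right]
          rw [this]
          have hfl : h.left = Multiplicative.ofAdd f := rfl
          rw [hfl, emAction_apply]
          simp
        have cinj : Function.Injective c := by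
          intro k₁ k₂ hk
          by_contra hkk
          have hav : ∀ a, f (a - 2 * k₁) = f (a - 2 * k₂) := by
            intro a
            rw [← hcleft k₁ a, ← hcleft k₂ a, hk]
          set e : ℤ := 2 * k₂ - 2 * k₁ with he
          have he0 : e ≠ 0 := by
            simp only [he, sub_ne_zero]
            intro h'
            exact hkk (by omega)
          have htrans : ∀ a, f (a - e) = f a := by
            intro a
            have h' := hav (a + 2 * k₁)
            calc f (a - e) = f (a + 2 * k₁ - 2 * k₂) := by rw [he]; congr 1; ring
              _ = f (a + 2 * k₁ - 2 * k₁) := h'.symm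
              _ = f a := by congr 1; ring
          have hfS : f.support.Nonempty := Finsupp.support_nonempty_iff.mpr hf0
          set M := f.support.max' hfS with hM
          have hMmem : M ∈ f.support := f.support.max'_mem hfS
          rcases lt_or_gt_of_ne he0 with hlt | hgt
          · have h0 : f (M - e) ≠ 0 := by
              rw [htrans M]; exact Finsupp.mem_support_iff.mp hMmem
            have hmem' : M - e ∈ f.support := Finsupp.mem_support_iff.mpr h0
            have := f.support.le_max' _ hmem'
            omega
          · have h0 : f (M + e) ≠ 0 := by
              have h'' := htrans (M + e)
              rw [show M + e - e = M by ring] at h''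
              rw [← h'']; exact Finsupp.mem_support_iff.mp hMmem
            have hmem' : M + e ∈ f.support := Finsupp.mem_support_iff.mpr h0
            have := f.support.le_max' _ hmem'
            omega
        have hrange : Set.range c ⊆ ↑x.coeff.support := by
          rintro _ ⟨k, rfl⟩
          simp only [Finset.mem_coe, Finsupp.mem_support_iff]
          rw [hc]
          rw [key]
          exact hmem
        exact absurd (x.coeff.support.finite_toSet.subset hrange)
          (Set.infinite_range_of_injective cinj)
      · -- right component nonzero; conjugate by inl (single 0 k)
        set n : ℤ := Multiplicative.toAdd h.right with hn
        have hn0 : n ≠ 0 := by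
          intro h0
          apply hr
          have : h.right = Multiplicative.ofAdd (0 : ℤ) := by rw [← h0]; rfl
          simpa using this
        set c : ℤ → EMGroup := fun k =>
          SemidirectProduct.inl (Multiplicative.ofAdd (Finsupp.single (0:ℤ) k)) * h *
            (SemidirectProduct.inl (Multiplicative.ofAdd (Finsupp.single (0:ℤ) k)))⁻¹ with hc
        have hcleft : ∀ k, Multiplicative.toAdd (c k).left 0
            = k + Multiplicative.toAdd h.left 0 := by
          intro k
          have hck : (c k).left = Multiplicative.ofAdd (Finsupp.single (0:ℤ) k) * h.left *
              (emAction h.right (Multiplicative.ofAdd (Finsupp.single (0:ℤ) k)))⁻¹ := by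
            simp [hc, SemidirectProduct.mul_left, SemidirectProduct.inv_left,
              SemidirectProduct.mul_right, mul_assoc]
          rw [hck]
          have : Multiplicative.toAdd ((emAction h.right)
              (Multiplicative.ofAdd (Finsupp.single (0:ℤ) k))) 0 = 0 := by
            rw [emAction_apply]
            rw [Finsupp.single_apply]
            rw [if_neg (by omega)]
          simp only [toAdd_mul, toAdd_inv, Finsupp.coe_add, Finsupp.coe_neg, Pi.add_apply,
            Pi.neg_apply, this]
          rw [toAdd_ofAdd]
          rw [Finsupp.single_eq_same]
          ring
        have cinj : Function.Injective c := by
          intro k₁ k₂ hk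
          have := hcleft k₁
          rw [hk, hcleft k₂] at this
          omega
        have hrange : Set.range c ⊆ ↑x.coeff.support := by
          rintro _ ⟨k, rfl⟩
          simp only [Finset.mem_coe, Finsupp.mem_support_iff]
          rw [hc, key]
          exact hmem
        exact absurd (x.coeff.support.finite_toSet.subset hrange)
          (Set.infinite_range_of_injective cinj)
    refine ⟨x.coeff 1, ?_⟩
    have : x = MonoidAlgebra.single 1 (x.coeff 1) := by
      ext a
      by_cases ha : a = 1
      · subst ha; simp
      · rw [MonoidAlgebra.coeff_single, Finsupp.single_apply, if_neg (fun h => ha h.symm)]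
        by_contra h'
        exact ha (hsupp a (Finsupp.mem_support_iff.mpr h'))
    rw [this]
    simp [MonoidAlgebra.coe_algebraMap]
  · rintro ⟨r, rfl⟩
    exact Subring.mem_center_iff.mpr fun g => (Algebra.commutes r g).symm
end

section
/- Let K be an integral domain and H a group such that the group algebra K[H] has only trivial units: every unit of K[H] is of the form a·h for some a ∈ Kˣ and h ∈ H. Let η be a ring automorphism of K, and let ψ be a group automorphism of the unit group (K[H])ˣ such that ψ(â) = (η(a))^ for every a ∈ Kˣ, where â denotes the unit a·1 of K[H]. Then there exists a ring automorphism Θ of K[H] satisfying Θ(a·h) = η(a)·ψ(ĥ) for all a ∈ K and h ∈ H (where ĥ denotes h regarded as a unit of K[H], and ψ(ĥ) is viewed as an element of K[H]); in particular Θ extends η on the scalars K and satisfies Θ(u) = ψ(u) for every unit u of (K[H])ˣ. -/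
section Aux

variable {K : Type*} [CommRing K] {H : Type*} [Group H]

/-- The group element `h` as a unit of the group algebra. -/
noncomputable def unitOfH (K : Type*) [CommRing K] {H : Type*} [Group H] :
    H →* (MonoidAlgebra K H)ˣ :=
  (Units.map (MonoidAlgebra.of K H)).comp toUnits.toMonoidHom

lemma unitOfH_val (h : H) :
    ((unitOfH K h : (MonoidAlgebra K H)ˣ) : MonoidAlgebra K H)
      = MonoidAlgebra.single h (1 : K) := rfl

/-- The scalar unit `a·1`. -/
noncomputable def sUnit (H : Type*) [Group H] {K : Type*} [CommRing K] :
    Kˣ →* (MonoidAlgebra K H)ˣ :=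
  Units.map (MonoidAlgebra.singleOneRingHom : K →+* MonoidAlgebra K H).toMonoidHom

lemma sUnit_val (a : Kˣ) :
    ((sUnit H a : (MonoidAlgebra K H)ˣ) : MonoidAlgebra K H)
      = MonoidAlgebra.single (1 : H) (a : K) := rfl

/-- Key construction: the ring hom extending `η` and `ψ`. -/
theorem exists_ringHom_ext
    (htriv : ∀ v : (MonoidAlgebra K H)ˣ, ∃ (a : Kˣ) (h : H),
      (v : MonoidAlgebra K H) = MonoidAlgebra.single h (a : K))
    (η : K ≃+* K) (ψ : (MonoidAlgebra K H)ˣ ≃* (MonoidAlgebra K H)ˣ)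
    (hψη : ∀ (a : Kˣ) (U : (MonoidAlgebra K H)ˣ),
      (U : MonoidAlgebra K H) = MonoidAlgebra.single (1 : H) (a : K) →
      (ψ U : MonoidAlgebra K H) = MonoidAlgebra.single (1 : H) (η a : K)) :
    ∃ Θ : MonoidAlgebra K H →+* MonoidAlgebra K H,
      (∀ (a : K) (h : H), Θ (MonoidAlgebra.single h a) =
        MonoidAlgebra.single (1 : H) (η a) * (ψ (unitOfH K h) : MonoidAlgebra K H)) ∧
      (∀ v : (MonoidAlgebra K H)ˣ,
        Θ (v : MonoidAlgebra K H) = (ψ v : MonoidAlgebra K H)) := by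
  set f : K →+* MonoidAlgebra K H :=
    (MonoidAlgebra.singleOneRingHom : K →+* MonoidAlgebra K H).comp (η : K →+* K)
  set g : H →* MonoidAlgebra K H :=
    (Units.coeHom _).comp (ψ.toMonoidHom.comp (unitOfH K))
  have hcomm : ∀ (x : K) (h : H), Commute (f x) (g h) := fun x h => by
    exact MonoidAlgebra.single_one_comm (η x) (g h)
  refine ⟨MonoidAlgebra.liftNCRingHom f g hcomm, fun a h => ?_, fun v => ?_⟩
  · simp [MonoidAlgebra.liftNCRingHom, MonoidAlgebra.liftNC_single, f, g,
      MonoidAlgebra.singleOneRingHom]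
  · obtain ⟨a, h, hv⟩ := htriv v
    have hveq : v = sUnit H a * unitOfH K h := by
      ext
      rw [hv, Units.val_mul, sUnit_val, unitOfH_val, MonoidAlgebra.single_mul_single,
        one_mul, mul_one]
    have hsimp : (ψ (sUnit H a) : MonoidAlgebra K H)
        = MonoidAlgebra.single (1 : H) (η a) := hψη a _ rfl
    rw [hv, hveq, map_mul, Units.val_mul, hsimp]
    simp [MonoidAlgebra.liftNCRingHom, MonoidAlgebra.liftNC_single, f, g,
      MonoidAlgebra.singleOneRingHom]

/-- Transferring the compatibility hypothesis to the inverses. -/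
theorem hψη_symm
    (η : K ≃+* K) (ψ : (MonoidAlgebra K H)ˣ ≃* (MonoidAlgebra K H)ˣ)
    (hψη : ∀ (a : Kˣ) (U : (MonoidAlgebra K H)ˣ),
      (U : MonoidAlgebra K H) = MonoidAlgebra.single (1 : H) (a : K) →
      (ψ U : MonoidAlgebra K H) = MonoidAlgebra.single (1 : H) (η a : K)) :
    ∀ (a : Kˣ) (U : (MonoidAlgebra K H)ˣ),
      (U : MonoidAlgebra K H) = MonoidAlgebra.single (1 : H) (a : K) →
      (ψ.symm U : MonoidAlgebra K H) = MonoidAlgebra.single (1 : H) (η.symm a : K) := by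
  intro a U hU
  set a' : Kˣ := Units.map (η.symm : K →+* K).toMonoidHom a with ha'
  have h1 : (ψ (sUnit H a') : MonoidAlgebra K H)
      = MonoidAlgebra.single (1 : H) (η a' : K) := hψη a' _ rfl
  have h2 : ψ (sUnit H a') = U := by
    ext
    rw [h1, hU]
    simp [a']
  have h3 : ψ.symm U = sUnit H a' := by rw [← h2, MulEquiv.symm_apply_apply]
  rw [h3, sUnit_val]
  rfl

end Aux

/-- Paper: Lemma 5.6, 'extres'.
Let `K` be an integral domain and `H` a group such that the group algebra `K[H]` has
only trivial units (every unit is `a·h` with `a ∈ Kˣ`, `h ∈ H`).  Given a ring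
automorphism `η` of `K` and a group automorphism `ψ` of `(K[H])ˣ` agreeing with `η` on
the scalar units, there is a ring automorphism `Θ` of `K[H]` with
`Θ (a·h) = η a · ψ ĥ` for all `a ∈ K`, `h ∈ H`; in particular `Θ` extends `η` on the
scalars and coincides with `ψ` on all units. -/
theorem clifford_stmt12 {K : Type*} [CommRing K] [IsDomain K] {H : Type*} [Group H]
    (htriv : ∀ v : (MonoidAlgebra K H)ˣ, ∃ (a : Kˣ) (h : H),
      (v : MonoidAlgebra K H) = MonoidAlgebra.single h (a : K))
    (η : K ≃+* K) (ψ : (MonoidAlgebra K H)ˣ ≃* (MonoidAlgebra K H)ˣ)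
    (hψη : ∀ (a : Kˣ) (U : (MonoidAlgebra K H)ˣ),
      (U : MonoidAlgebra K H) = MonoidAlgebra.single (1 : H) (a : K) →
      (ψ U : MonoidAlgebra K H) = MonoidAlgebra.single (1 : H) (η a : K)) :
    ∃ Θ : MonoidAlgebra K H ≃+* MonoidAlgebra K H,
      (∀ (a : K) (h : H) (U : (MonoidAlgebra K H)ˣ),
        (U : MonoidAlgebra K H) = MonoidAlgebra.single h (1 : K) →
        Θ (MonoidAlgebra.single h a) =
          MonoidAlgebra.single (1 : H) (η a) * (ψ U : MonoidAlgebra K H)) ∧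
      (∀ x : K, Θ (MonoidAlgebra.single (1 : H) x) = MonoidAlgebra.single (1 : H) (η x)) ∧
      (∀ v : (MonoidAlgebra K H)ˣ, Θ (v : MonoidAlgebra K H) = (ψ v : MonoidAlgebra K H)) := by
  obtain ⟨F, hF1, hF2⟩ := exists_ringHom_ext htriv η ψ hψη
  obtain ⟨G, hG1, hG2⟩ := exists_ringHom_ext htriv η.symm ψ.symm (hψη_symm η ψ hψη)
  have hcomp : ∀ (F' G' : MonoidAlgebra K H →+* MonoidAlgebra K H)
      (η' : K ≃+* K) (ψ' : (MonoidAlgebra K H)ˣ ≃* (MonoidAlgebra K H)ˣ),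
      (∀ (a : K) (h : H), F' (MonoidAlgebra.single h a) =
        MonoidAlgebra.single (1 : H) (η' a) * (ψ' (unitOfH K h) : MonoidAlgebra K H)) →
      (∀ v : (MonoidAlgebra K H)ˣ,
        G' (v : MonoidAlgebra K H) = (ψ'.symm v : MonoidAlgebra K H)) →
      (∀ x : K, G' (MonoidAlgebra.single (1:H) (η' x)) = MonoidAlgebra.single (1:H) x) →
      G'.comp F' = RingHom.id (MonoidAlgebra K H) := by
    intro F' G' η' ψ' hF hGu hGs
    apply MonoidAlgebra.ringHom_ext
    · intro b
      simp only [RingHom.comp_apply, RingHom.id_apply, hF b 1]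
      rw [map_one, map_one]
      simp only [Units.val_one, mul_one]
      exact hGs b
    · intro h
      simp only [RingHom.comp_apply, RingHom.id_apply, hF 1 h]
      rw [map_one]
      have h1 : MonoidAlgebra.single (1:H) (1:K)
          = (1 : MonoidAlgebra K H) := MonoidAlgebra.one_def.symm
      rw [h1, one_mul, hGu (ψ' (unitOfH K h)), MulEquiv.symm_apply_apply, unitOfH_val]
  have hGF : G.comp F = RingHom.id _ := by
    refine hcomp F G η ψ hF1 hG2 ?_
    intro x
    rw [hG1 (η x) 1]
    simp only [RingEquiv.symm_apply_apply, map_one, Units.val_one, mul_one]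
  have hFG : F.comp G = RingHom.id _ := by
    refine hcomp G F η.symm ψ.symm hG1 (by simpa using hF2) ?_
    intro x
    rw [hF1 (η.symm x) 1]
    simp only [RingEquiv.apply_symm_apply, map_one, Units.val_one, mul_one]
  refine ⟨RingEquiv.ofRingHom F G (by exact hFG) (by exact hGF), ?_, ?_, ?_⟩
  · intro a h U hU
    have hUeq : U = unitOfH K h := by ext; rw [hU, unitOfH_val]
    rw [hUeq]
    exact hF1 a h
  · intro x
    have := hF1 x 1
    simpa using this
  · exact hF2
end
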